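/- arXiv:2401.10151 — 8 statements merged into one kernel-verified Lean document; each statement's English description precedes it below -/
import Mathlib

section
/- Uniform bound for the pre-gluing map: let T ≥ 3 and let w₊ : [0,∞) → ℝⁿ and w₋ : (−∞,0] → ℝⁿ be continuously differentiable with finite W^{1,2}-norms. Then the pre-glued path w_T : [−T,T] → ℝⁿ is continuously differentiable and satisfies ‖w_T‖²_{W^{1,2}([−T,T])} ≤ 2(1 + ‖β′‖²_∞)(‖w₊‖²_{W^{1,2}([0,∞))} + ‖w₋‖²_{W^{1,2}((−∞,0])}). In particular the pre-gluing map is bounded by a constant depending only on the cutoff function β and not on T. -/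
open Set

/-- **Uniform bound for the pre-gluing map.** Fix a smooth cutoff function
`β : ℝ → [0,1]` with `β(s) = 0` for `s ≤ -1` and `β(s) = 1` for `s ≥ 1`.
Let `T ≥ 3` and let `wp : [0,∞) → ℝⁿ`, `wm : (-∞,0] → ℝⁿ` be continuously
differentiable (with derivatives `wpd`, `wmd`) with finite `W^{1,2}`-norms.
Then the pre-glued path `w_T(s) = (1 - β(s+2)) wp(T+s) + β(s-2) wm(-T+s)`
is continuously differentiable on `[-T,T]` and satisfies
`‖w_T‖²_{W^{1,2}([-T,T])} ≤ 2 (1 + ‖β'‖_∞²) (‖wp‖²_{W^{1,2}([0,∞))} + ‖wm‖²_{W^{1,2}((-∞,0])})`;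
in particular the pre-gluing map is bounded by a constant depending only on `β`,
not on `T`. -/
theorem pre_gluing_uniform_bound (n : ℕ)
    (β : ℝ → ℝ) (hβ : ContDiff ℝ (⊤ : ℕ∞) β) (hβ01 : ∀ s, β s ∈ Icc (0:ℝ) 1)
    (hβ0 : ∀ s ≤ (-1:ℝ), β s = 0) (hβ1 : ∀ s ≥ (1:ℝ), β s = 1)
    (T : ℝ) (hT : 3 ≤ T)
    (wp wpd : ℝ → EuclideanSpace ℝ (Fin n))
    (wm wmd : ℝ → EuclideanSpace ℝ (Fin n))
    (hwp : ∀ s ∈ Ici (0:ℝ), HasDerivWithinAt wp (wpd s) (Ici (0:ℝ)) s)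
    (hwpd : ContinuousOn wpd (Ici (0:ℝ)))
    (hwpint : MeasureTheory.IntegrableOn (fun s => ‖wp s‖ ^ 2 + ‖wpd s‖ ^ 2) (Ici (0:ℝ)))
    (hwm : ∀ s ∈ Iic (0:ℝ), HasDerivWithinAt wm (wmd s) (Iic (0:ℝ)) s)
    (hwmd : ContinuousOn wmd (Iic (0:ℝ)))
    (hwmint : MeasureTheory.IntegrableOn (fun s => ‖wm s‖ ^ 2 + ‖wmd s‖ ^ 2) (Iic (0:ℝ)))
    (wT wTd : ℝ → EuclideanSpace ℝ (Fin n))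
    (hwT : ∀ s, wT s = (1 - β (s + 2)) • wp (T + s) + β (s - 2) • wm (-T + s))
    (hwTd : ∀ s, wTd s =
      (-(deriv β (s + 2))) • wp (T + s) + (1 - β (s + 2)) • wpd (T + s)
        + (deriv β (s - 2)) • wm (-T + s) + β (s - 2) • wmd (-T + s)) :
    (∀ s ∈ Icc (-T) T, HasDerivWithinAt wT (wTd s) (Icc (-T) T) s) ∧
    ContinuousOn wTd (Icc (-T) T) ∧
    (∫ s in (-T)..T, (‖wT s‖ ^ 2 + ‖wTd s‖ ^ 2)) ≤
      2 * (1 + (⨆ s : ℝ, |deriv β s|) ^ 2) *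
        ((∫ s in Ici (0:ℝ), (‖wp s‖ ^ 2 + ‖wpd s‖ ^ 2)) +
         (∫ s in Iic (0:ℝ), (‖wm s‖ ^ 2 + ‖wmd s‖ ^ 2))) := by

  classical
  -- basic facts about β and its derivative
  have hβdiff : Differentiable ℝ β := hβ.differentiable (by simp)
  have hβcont : Continuous (deriv β) := hβ.continuous_deriv (by simp)
  have hd0 : ∀ x : ℝ, x < -1 → deriv β x = 0 := by
    intro x hx
    have h : β =ᶠ[nhds x] fun _ => (0:ℝ) := by
      filter_upwards [Iio_mem_nhds hx] with y hy using hβ0 y hy.le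
    rw [h.deriv_eq]; exact deriv_const x 0
  have hd1 : ∀ x : ℝ, 1 ≤ x → deriv β x = 0 := by
    intro x hx
    rcases eq_or_lt_of_le hx with rfl | hx'
    · have hu : UniqueDiffWithinAt ℝ (Ici (1:ℝ)) 1 := uniqueDiffOn_Ici 1 1 self_mem_Ici
      have h1 : HasDerivWithinAt β (deriv β 1) (Ici 1) 1 :=
        (hβdiff 1).hasDerivAt.hasDerivWithinAt
      have h2 : HasDerivWithinAt β 0 (Ici 1) 1 :=
        (hasDerivWithinAt_const 1 (Ici (1:ℝ)) 1).congr (fun y hy => hβ1 y hy) (hβ1 1 le_rfl)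
      rw [← h1.derivWithin hu, h2.derivWithin hu]
    · have h : β =ᶠ[nhds x] fun _ => (1:ℝ) := by
        filter_upwards [Ioi_mem_nhds hx'] with y hy using hβ1 y hy.le
      rw [h.deriv_eq]; exact deriv_const x 1
  set M : ℝ := ⨆ s : ℝ, |deriv β s| with hMdef
  obtain ⟨C, hC⟩ :=
    (isCompact_Icc (a := (-1:ℝ)) (b := 1)).exists_bound_of_continuousOn hβcont.continuousOn
  have hbdd : BddAbove (range fun s : ℝ => |deriv β s|) := by
    refine ⟨max C 0, ?_⟩
    rintro _ ⟨x, rfl⟩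
    show |deriv β x| ≤ max C 0
    rcases lt_or_ge x (-1) with h | h
    · rw [hd0 x h]; simp
    rcases le_or_gt 1 x with h' | h'
    · rw [hd1 x h']; simp
    · exact le_max_of_le_left (by simpa [Real.norm_eq_abs] using hC x ⟨h, h'.le⟩)
  have hM : ∀ x : ℝ, |deriv β x| ≤ M := fun x => le_ciSup hbdd x
  have hM0 : 0 ≤ M := (abs_nonneg _).trans (hM 0)
  -- maps
  have hmap1 : MapsTo (fun u : ℝ => T + u) (Icc (-T) T) (Ici 0) := fun u hu => by
    simp only [mem_Ici]; linarith [hu.1]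
  have hmap2 : MapsTo (fun u : ℝ => -T + u) (Icc (-T) T) (Iic 0) := fun u hu => by
    simp only [mem_Iic]; linarith [hu.2]
  -- Part 1 : differentiability
  have hpart1 : ∀ s ∈ Icc (-T) T, HasDerivWithinAt wT (wTd s) (Icc (-T) T) s := by
    intro s hs
    have hA : HasDerivWithinAt (fun u => wp (T + u)) (wpd (T + s)) (Icc (-T) T) s := by
      have := (hwp (T + s) (hmap1 hs)).scomp_of_eq s
        (((hasDerivAt_id s).const_add T).hasDerivWithinAt) hmap1 rfl
      exact this.congr_deriv (by simp)
    have hB : HasDerivWithinAt (fun u => wm (-T + u)) (wmd (-T + s)) (Icc (-T) T) s := by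
      have := (hwm (-T + s) (hmap2 hs)).scomp_of_eq s
        (((hasDerivAt_id s).const_add (-T)).hasDerivWithinAt) hmap2 rfl
      exact this.congr_deriv (by simp)
    have hb1 : HasDerivAt (fun u : ℝ => β (u + 2)) (deriv β (s + 2)) s := by
      have := ((hβdiff (s + 2)).hasDerivAt).comp s ((hasDerivAt_id s).add_const 2)
      exact this.congr_deriv (by simp)
    have hb2 : HasDerivAt (fun u : ℝ => β (u - 2)) (deriv β (s - 2)) s := by
      have := ((hβdiff (s - 2)).hasDerivAt).comp s ((hasDerivAt_id s).sub_const 2)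
      exact this.congr_deriv (by simp)
    have hc1 : HasDerivWithinAt (fun u : ℝ => 1 - β (u + 2)) (-(deriv β (s + 2)))
        (Icc (-T) T) s := by
      exact ((hasDerivAt_const s (1:ℝ)).sub hb1).hasDerivWithinAt.congr_deriv (by simp)
    have htot := ((hc1.smul hA).add (hb2.hasDerivWithinAt.smul hB)).congr
      (fun y _ => hwT y) (hwT s)
    rw [hwTd s]
    exact htot.congr_deriv (by module)
  -- Part 2 : continuity of the derivative
  have hcwp : ContinuousOn wp (Ici 0) := fun x hx => (hwp x hx).continuousWithinAt
  have hcwm : ContinuousOn wm (Iic 0) := fun x hx => (hwm x hx).continuousWithinAt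
  have hcinn1 : Continuous (fun u : ℝ => T + u) := continuous_const.add continuous_id
  have hcinn2 : Continuous (fun u : ℝ => -T + u) := continuous_const.add continuous_id
  have hcA : ContinuousOn (fun s => wp (T + s)) (Icc (-T) T) :=
    hcwp.comp hcinn1.continuousOn hmap1
  have hcA' : ContinuousOn (fun s => wpd (T + s)) (Icc (-T) T) :=
    hwpd.comp hcinn1.continuousOn hmap1
  have hcB : ContinuousOn (fun s => wm (-T + s)) (Icc (-T) T) :=
    hcwm.comp hcinn2.continuousOn hmap2
  have hcB' : ContinuousOn (fun s => wmd (-T + s)) (Icc (-T) T) :=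
    hwmd.comp hcinn2.continuousOn hmap2
  have hpart2 : ContinuousOn wTd (Icc (-T) T) := by
    have hbig : ContinuousOn (fun s =>
        (-(deriv β (s + 2))) • wp (T + s) + (1 - β (s + 2)) • wpd (T + s)
          + (deriv β (s - 2)) • wm (-T + s) + β (s - 2) • wmd (-T + s)) (Icc (-T) T) := by
      refine ContinuousOn.add (ContinuousOn.add (ContinuousOn.add ?_ ?_) ?_) ?_
      · exact ((hβcont.comp (continuous_id.add continuous_const)).neg).continuousOn.smul hcA
      · exact ((continuous_const.sub
          (hβ.continuous.comp (continuous_id.add continuous_const))).continuousOn).smul hcA'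
      · exact ((hβcont.comp (continuous_id.sub continuous_const)).continuousOn).smul hcB
      · exact ((hβ.continuous.comp (continuous_id.sub continuous_const)).continuousOn).smul hcB'
    exact hbig.congr fun s _ => hwTd s
  refine ⟨hpart1, hpart2, ?_⟩
  -- Part 3 : the integral bound
  set Gp : ℝ → ℝ := fun s => ‖wp s‖ ^ 2 + ‖wpd s‖ ^ 2 with hGpdef
  set Gm : ℝ → ℝ := fun s => ‖wm s‖ ^ 2 + ‖wmd s‖ ^ 2 with hGmdef
  set F : ℝ → ℝ := fun s => ‖wT s‖ ^ 2 + ‖wTd s‖ ^ 2 with hFdef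
  -- pointwise bounds
  have hbound1 : ∀ s ∈ Icc (-T) (-1 : ℝ), F s ≤ 2 * (1 + M ^ 2) * Gp (T + s) := by
    intro s hs
    have h1 : β (s - 2) = 0 := hβ0 _ (by linarith [hs.2])
    have h2 : deriv β (s - 2) = 0 := hd0 _ (by linarith [hs.2])
    have e1 : wT s = (1 - β (s + 2)) • wp (T + s) := by rw [hwT s, h1]; simp
    have e2 : wTd s = (-(deriv β (s + 2))) • wp (T + s) + (1 - β (s + 2)) • wpd (T + s) := by
      rw [hwTd s, h1, h2]; simp
    have hb01 := hβ01 (s + 2)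
    have ha : (0:ℝ) ≤ ‖wp (T + s)‖ := norm_nonneg _
    have hbb : (0:ℝ) ≤ ‖wpd (T + s)‖ := norm_nonneg _
    have hn1 : ‖wT s‖ ≤ ‖wp (T + s)‖ := by
      rw [e1, norm_smul, Real.norm_eq_abs, abs_of_nonneg (by linarith [hb01.2])]
      nlinarith [hb01.1]
    have hn2 : ‖wTd s‖ ≤ M * ‖wp (T + s)‖ + ‖wpd (T + s)‖ := by
      have hx1 : ‖(-(deriv β (s + 2))) • wp (T + s)‖ ≤ M * ‖wp (T + s)‖ := by
        rw [norm_smul, Real.norm_eq_abs, abs_neg]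
        exact mul_le_mul_of_nonneg_right (hM _) ha
      have hx2 : ‖(1 - β (s + 2)) • wpd (T + s)‖ ≤ ‖wpd (T + s)‖ := by
        rw [norm_smul, Real.norm_eq_abs, abs_of_nonneg (by linarith [hb01.2])]
        nlinarith [hb01.1]
      rw [e2]
      exact (norm_add_le _ _).trans (add_le_add hx1 hx2)
    show ‖wT s‖ ^ 2 + ‖wTd s‖ ^ 2 ≤ 2 * (1 + M ^ 2) * (‖wp (T + s)‖ ^ 2 + ‖wpd (T + s)‖ ^ 2)
    nlinarith [norm_nonneg (wT s), norm_nonneg (wTd s),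
      sq_nonneg (M * ‖wp (T + s)‖ - ‖wpd (T + s)‖), sq_nonneg (‖wp (T + s)‖ - ‖wpd (T + s)‖),
      hM0, hn1, hn2, ha, hbb]
  have hbound2 : ∀ s ∈ Icc (-1 : ℝ) T, F s ≤ 2 * (1 + M ^ 2) * Gm (-T + s) := by
    intro s hs
    have h1 : β (s + 2) = 1 := hβ1 _ (by linarith [hs.1])
    have h2 : deriv β (s + 2) = 0 := hd1 _ (by linarith [hs.1])
    have e1 : wT s = β (s - 2) • wm (-T + s) := by rw [hwT s, h1]; simp
    have e2 : wTd s = (deriv β (s - 2)) • wm (-T + s) + β (s - 2) • wmd (-T + s) := by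
      rw [hwTd s, h1, h2]; simp
    have hb01 := hβ01 (s - 2)
    have ha : (0:ℝ) ≤ ‖wm (-T + s)‖ := norm_nonneg _
    have hbb : (0:ℝ) ≤ ‖wmd (-T + s)‖ := norm_nonneg _
    have hn1 : ‖wT s‖ ≤ ‖wm (-T + s)‖ := by
      rw [e1, norm_smul, Real.norm_eq_abs, abs_of_nonneg hb01.1]
      nlinarith [hb01.2]
    have hn2 : ‖wTd s‖ ≤ M * ‖wm (-T + s)‖ + ‖wmd (-T + s)‖ := by
      have hx1 : ‖(deriv β (s - 2)) • wm (-T + s)‖ ≤ M * ‖wm (-T + s)‖ := by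
        rw [norm_smul, Real.norm_eq_abs]
        exact mul_le_mul_of_nonneg_right (hM _) ha
      have hx2 : ‖β (s - 2) • wmd (-T + s)‖ ≤ ‖wmd (-T + s)‖ := by
        rw [norm_smul, Real.norm_eq_abs, abs_of_nonneg hb01.1]
        nlinarith [hb01.2]
      rw [e2]
      exact (norm_add_le _ _).trans (add_le_add hx1 hx2)
    show ‖wT s‖ ^ 2 + ‖wTd s‖ ^ 2 ≤ 2 * (1 + M ^ 2) * (‖wm (-T + s)‖ ^ 2 + ‖wmd (-T + s)‖ ^ 2)
    nlinarith [norm_nonneg (wT s), norm_nonneg (wTd s),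
      sq_nonneg (M * ‖wm (-T + s)‖ - ‖wmd (-T + s)‖), sq_nonneg (‖wm (-T + s)‖ - ‖wmd (-T + s)‖),
      hM0, hn1, hn2, ha, hbb]
  -- integrability
  have hT1 : (-T : ℝ) ≤ -1 := by linarith
  have h1T : (-1 : ℝ) ≤ T := by linarith
  have hcwT : ContinuousOn wT (Icc (-T) T) := fun x hx => (hpart1 x hx).continuousWithinAt
  have hcF : ContinuousOn F (Icc (-T) T) := (hcwT.norm.pow 2).add (hpart2.norm.pow 2)
  have hIF1 : IntervalIntegrable F MeasureTheory.volume (-T) (-1) :=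
    (hcF.mono (by rw [uIcc_of_le hT1]; exact Icc_subset_Icc le_rfl (by linarith))).intervalIntegrable
  have hIF2 : IntervalIntegrable F MeasureTheory.volume (-1) T :=
    (hcF.mono (by rw [uIcc_of_le h1T]; exact Icc_subset_Icc (by linarith) le_rfl)).intervalIntegrable
  have hGpI : IntervalIntegrable Gp MeasureTheory.volume 0 (T - 1) := by
    rw [intervalIntegrable_iff, uIoc_of_le (by linarith : (0:ℝ) ≤ T - 1)]
    exact hwpint.mono_set fun x hx => hx.1.le
  have hGmI : IntervalIntegrable Gm MeasureTheory.volume (-T - 1) 0 := by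
    rw [intervalIntegrable_iff, uIoc_of_le (by linarith : (-T - 1:ℝ) ≤ 0)]
    exact hwmint.mono_set fun x hx => hx.2
  have hGpc : IntervalIntegrable (fun s => Gp (T + s)) MeasureTheory.volume (-T) (-1) := by
    have := hGpI.comp_add_left T
    rw [show (0:ℝ) - T = -T by ring, show T - 1 - T = -1 by ring] at this
    exact this
  have hGmc : IntervalIntegrable (fun s => Gm (-T + s)) MeasureTheory.volume (-1) T := by
    have := hGmI.comp_add_left (-T)
    rw [show (-T - 1:ℝ) - -T = -1 by ring, show (0:ℝ) - -T = T by ring] at this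
    exact this
  have hGpnn : 0 ≤ᵐ[MeasureTheory.volume.restrict (Ici (0:ℝ))] Gp :=
    Filter.Eventually.of_forall fun x => add_nonneg (sq_nonneg _) (sq_nonneg _)
  have hGmnn : 0 ≤ᵐ[MeasureTheory.volume.restrict (Iic (0:ℝ))] Gm :=
    Filter.Eventually.of_forall fun x => add_nonneg (sq_nonneg _) (sq_nonneg _)
  have hCnn : (0:ℝ) ≤ 2 * (1 + M ^ 2) := by positivity
  have key1 : (∫ s in (-T)..(-1:ℝ), F s) ≤ 2 * (1 + M ^ 2) * ∫ s in Ici (0:ℝ), Gp s := by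
    calc (∫ s in (-T)..(-1:ℝ), F s)
        ≤ ∫ s in (-T)..(-1:ℝ), 2 * (1 + M ^ 2) * Gp (T + s) :=
          intervalIntegral.integral_mono_on hT1 hIF1 (hGpc.const_mul _) hbound1
      _ = 2 * (1 + M ^ 2) * ∫ s in (-T)..(-1:ℝ), Gp (T + s) :=
          intervalIntegral.integral_const_mul _ _
      _ = 2 * (1 + M ^ 2) * ∫ s in (0:ℝ)..(T - 1), Gp s := by
          rw [intervalIntegral.integral_comp_add_left Gp, show T + -T = (0:ℝ) by ring,
            show T + -1 = T - 1 by ring]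
      _ ≤ 2 * (1 + M ^ 2) * ∫ s in Ici (0:ℝ), Gp s := by
          refine mul_le_mul_of_nonneg_left ?_ hCnn
          rw [intervalIntegral.integral_of_le (by linarith : (0:ℝ) ≤ T - 1)]
          exact MeasureTheory.setIntegral_mono_set hwpint hGpnn
            (HasSubset.Subset.eventuallyLE fun x hx => le_of_lt hx.1)
  have key2 : (∫ s in (-1:ℝ)..T, F s) ≤ 2 * (1 + M ^ 2) * ∫ s in Iic (0:ℝ), Gm s := by
    calc (∫ s in (-1:ℝ)..T, F s)
        ≤ ∫ s in (-1:ℝ)..T, 2 * (1 + M ^ 2) * Gm (-T + s) :=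
          intervalIntegral.integral_mono_on h1T hIF2 (hGmc.const_mul _) hbound2
      _ = 2 * (1 + M ^ 2) * ∫ s in (-1:ℝ)..T, Gm (-T + s) :=
          intervalIntegral.integral_const_mul _ _
      _ = 2 * (1 + M ^ 2) * ∫ s in (-T - 1)..(0:ℝ), Gm s := by
          rw [intervalIntegral.integral_comp_add_left Gm, show -T + -1 = -T - 1 by ring,
            show -T + T = (0:ℝ) by ring]
      _ ≤ 2 * (1 + M ^ 2) * ∫ s in Iic (0:ℝ), Gm s := by
          refine mul_le_mul_of_nonneg_left ?_ hCnn
          rw [intervalIntegral.integral_of_le (by linarith : (-T - 1:ℝ) ≤ 0)]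
          exact MeasureTheory.setIntegral_mono_set hwmint hGmnn
            (HasSubset.Subset.eventuallyLE fun x hx => hx.2)
  have hsplit : (∫ s in (-T)..T, F s)
      = (∫ s in (-T)..(-1:ℝ), F s) + ∫ s in (-1:ℝ)..T, F s :=
    (intervalIntegral.integral_add_adjacent_intervals hIF1 hIF2).symm
  rw [hsplit]
  have hring : 2 * (1 + M ^ 2) * ((∫ s in Ici (0:ℝ), Gp s) + ∫ s in Iic (0:ℝ), Gm s)
      = 2 * (1 + M ^ 2) * (∫ s in Ici (0:ℝ), Gp s)
        + 2 * (1 + M ^ 2) * ∫ s in Iic (0:ℝ), Gm s := by ring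
  linarith [key1, key2]
end

section
/- Uniform bound for the projection onto the solution space along the chosen complement: let T ≥ 1 and let ζ : [−T,T] → ℝⁿ be continuously differentiable. Define ζ_E : [−T,T] → ℝⁿ by ζ_E(s) := (e^{−(s+T)A₊} p₊ζ(−T), e^{(s−T)A₋} p₋ζ(T)). Then ζ_E solves ζ_E′ + A ζ_E = 0 and satisfies ‖ζ_E‖²_{W^{1,2}([−T,T])} ≤ (4 · max{1 + a₁², 1 + aₙ²} / σ) · ‖ζ‖²_{W^{1,2}([−T,T])}; in particular the projection ζ ↦ ζ_E is bounded by a constant depending only on a₁ and aₙ and not on T. -/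
/-!
Each component `h` of `ζ_E` solves `h' = -aᵢ h`, so `∫ h² = (h(x)² - h(y)²) / (2aᵢ)` is bounded by
the square of its value at the endpoint where it is pinned to `ζ`, divided by `2σ`. Since also
`|ζ_E'|² + |ζ_E|² ≤ max (1 + aᵢ²) |ζ_E|²`, this bounds `‖ζ_E‖²_{W^{1,2}}` by
`max (1 + aᵢ²) (|ζ(-T)|² + |ζ(T)|²) / (2σ)`. A trace inequality closes the argument: integrating
`(φ |ζ|²)'` with `φ` affine from `-1` to `1` gives `|ζ(-T)|² + |ζ(T)|² ≤ 2 ‖ζ‖²_{W^{1,2}}` as soon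
as the interval has length at least `2`, i.e. `T ≥ 1`.
-/

open Set MeasureTheory

theorem sq_le_max_sq_of_mem_Icc {l u x : ℝ} (hl : l ≤ x) (hu : x ≤ u) :
    x ^ 2 ≤ max (u ^ 2) (l ^ 2) := by
  rcases le_total 0 x with hx | hx
  · exact le_max_of_le_left (pow_le_pow_left₀ hx hu 2)
  · exact le_max_of_le_right (by nlinarith)

theorem one_add_sq_le_max_of_antitone {ι : Type*} [Preorder ι] {a : ι → ℝ} (ha : Antitone a)
    {i₀ i₁ : ι} (h₀ : IsBot i₀) (h₁ : IsTop i₁) (i : ι) :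
    1 + a i ^ 2 ≤ max (1 + a i₀ ^ 2) (1 + a i₁ ^ 2) := by
  rw [max_add_add_left]
  exact add_le_add le_rfl (sq_le_max_sq_of_mem_Icc (ha (h₁ i)) (ha (h₀ i)))

theorem lt_ciInf_of_finite {ι α : Type*} [Finite ι] [Nonempty ι]
    [ConditionallyCompleteLinearOrder α] {f : ι → α} {b : α} (hf : ∀ i, b < f i) : b < ⨅ i, f i := by
  obtain ⟨i, hi⟩ := exists_eq_ciInf_of_finite (f := f)
  exact hi ▸ hf i

theorem mul_two_mul_real_inner_le {E : Type*} [NormedAddCommGroup E] [InnerProductSpace ℝ E]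
    {w : ℝ} (hw : |w| ≤ 1) (x y : E) : w * (2 * inner ℝ x y) ≤ ‖x‖ ^ 2 + ‖y‖ ^ 2 :=
  calc w * (2 * inner ℝ x y) ≤ |w| * |2 * inner ℝ x y| := (le_abs_self _).trans_eq (abs_mul _ _)
    _ ≤ 1 * (‖x‖ ^ 2 + ‖y‖ ^ 2) := by
        refine mul_le_mul hw ?_ (abs_nonneg _) zero_le_one
        rw [abs_mul, abs_two]
        nlinarith [abs_real_inner_le_norm x y, two_mul_le_add_sq ‖x‖ ‖y‖]
    _ = ‖x‖ ^ 2 + ‖y‖ ^ 2 := one_mul _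

theorem EuclideanSpace.hasDerivAt_of_apply {ι : Type*} [Fintype ι] {g : ℝ → EuclideanSpace ℝ ι}
    {g' : EuclideanSpace ℝ ι} {s : ℝ} (h : ∀ i, HasDerivAt (fun t => g t i) (g' i) s) :
    HasDerivAt g g' s := by
  let L := PiLp.continuousLinearEquiv 2 ℝ (fun _ : ι => ℝ)
  have hL : HasDerivAt (fun t => L (g t)) (L g') s := hasDerivAt_pi.2 h
  have hg := L.symm.hasFDerivAt.comp_hasDerivAt s hL
  simp only [Function.comp_def, ContinuousLinearEquiv.symm_apply_apply] at hg
  exact hg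

theorem EuclideanSpace.continuous_of_apply {ι : Type*} [Fintype ι] {g : ℝ → EuclideanSpace ℝ ι}
    (h : ∀ i, Continuous fun t => g t i) : Continuous g :=
  (PiLp.continuous_toLp 2 _).comp (continuous_pi h)

theorem norm_sq_add_norm_sq_le_of_apply_eq_neg_mul {ι : Type*} [Fintype ι] {a : ι → ℝ} {M : ℝ}
    (hM : ∀ i, 1 + a i ^ 2 ≤ M) {x y : EuclideanSpace ℝ ι} (hy : ∀ i, y i = -(a i * x i)) :
    ‖x‖ ^ 2 + ‖y‖ ^ 2 ≤ M * ‖x‖ ^ 2 := by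
  simp only [EuclideanSpace.real_norm_sq_eq, hy, Finset.mul_sum, ← Finset.sum_add_distrib]
  refine Finset.sum_le_sum fun i _ => ?_
  nlinarith [hM i, sq_nonneg (x i)]

theorem integral_norm_sq_add_norm_sq_le_mul {ι : Type*} [Fintype ι] {a : ι → ℝ} {M x y : ℝ}
    (hM : ∀ i, 1 + a i ^ 2 ≤ M) {g gd : ℝ → EuclideanSpace ℝ ι} (hg : Continuous g)
    (hgd : ∀ s i, gd s i = -(a i * g s i)) (hxy : x ≤ y) :
    ∫ s in x..y, (‖g s‖ ^ 2 + ‖gd s‖ ^ 2) ≤ M * ∫ s in x..y, ‖g s‖ ^ 2 := by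
  have hgd_cont : Continuous gd := EuclideanSpace.continuous_of_apply fun i => by
    simp only [hgd]
    fun_prop
  rw [← intervalIntegral.integral_const_mul]
  exact intervalIntegral.integral_mono_on hxy
    ((by fun_prop : Continuous _).intervalIntegrable _ _)
    ((by fun_prop : Continuous _).intervalIntegrable _ _)
    fun s _ => norm_sq_add_norm_sq_le_of_apply_eq_neg_mul hM (hgd s)

section ScalarDecay

variable {h : ℝ → ℝ} {a : ℝ}

theorem integral_sq_eq_of_hasDerivAt_neg_mul (ha : a ≠ 0)
    (hh : ∀ s, HasDerivAt h (-(a * h s)) s) (x y : ℝ) :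
    ∫ s in x..y, h s ^ 2 = (h x ^ 2 - h y ^ 2) / (2 * a) := by
  have hcont : Continuous h := continuous_iff_continuousAt.2 fun s => (hh s).continuousAt
  have hprim : ∀ s, HasDerivAt (fun s => -(h s * h s) / (2 * a)) (h s ^ 2) s := fun s =>
    (((hh s).mul (hh s)).neg.div_const (2 * a)).congr_deriv (by field_simp; ring)
  rw [intervalIntegral.integral_eq_sub_of_hasDerivAt (fun s _ => hprim s)
    ((hcont.pow 2).intervalIntegrable x y)]
  ring

theorem integral_sq_le_of_hasDerivAt_neg_mul_of_pos (ha : 0 < a)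
    (hh : ∀ s, HasDerivAt h (-(a * h s)) s) (x y : ℝ) :
    ∫ s in x..y, h s ^ 2 ≤ h x ^ 2 / (2 * a) := by
  rw [integral_sq_eq_of_hasDerivAt_neg_mul ha.ne' hh]
  gcongr
  linarith [sq_nonneg (h y)]

theorem integral_sq_le_of_hasDerivAt_neg_mul_of_neg (ha : a < 0)
    (hh : ∀ s, HasDerivAt h (-(a * h s)) s) (x y : ℝ) :
    ∫ s in x..y, h s ^ 2 ≤ h y ^ 2 / (2 * -a) := by
  rw [integral_sq_eq_of_hasDerivAt_neg_mul ha.ne hh, ← neg_div_neg_eq, ← mul_neg]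
  gcongr
  · linarith
  · linarith [sq_nonneg (h x)]

end ScalarDecay

theorem sq_norm_add_sq_norm_le_two_mul_integral {E : Type*} [NormedAddCommGroup E]
    [InnerProductSpace ℝ E] {f fd : ℝ → E} {b c : ℝ} (hbc : 2 ≤ c - b)
    (hf : ∀ s ∈ Icc b c, HasDerivWithinAt f (fd s) (Icc b c) s)
    (hfd : ContinuousOn fd (Icc b c)) :
    ‖f b‖ ^ 2 + ‖f c‖ ^ 2 ≤ 2 * ∫ s in b..c, (‖f s‖ ^ 2 + ‖fd s‖ ^ 2) := by
  set φ : ℝ → ℝ := fun s => (2 * s - b - c) / (c - b)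
  have hcb : 0 < c - b := by linarith
  have hb_le_c : b ≤ c := by linarith
  have hfc : ContinuousOn f (Icc b c) := fun s hs => (hf s hs).continuousWithinAt
  have hφ : ∀ s, HasDerivAt φ (2 / (c - b)) s := fun s => by
    simpa using ((((hasDerivAt_id s).const_mul 2).sub_const b).sub_const c).div_const (c - b)
  have hφ_abs : ∀ s ∈ Icc b c, |φ s| ≤ 1 := fun s hs => by
    rw [abs_div, abs_of_pos hcb, div_le_one hcb, abs_le]
    constructor <;> linarith [hs.1, hs.2]
  have hint : IntervalIntegrable
      (fun s => 2 / (c - b) * ‖f s‖ ^ 2 + φ s * (2 * inner ℝ (f s) (fd s))) volume b c :=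
    ContinuousOn.intervalIntegrable_of_Icc hb_le_c (by fun_prop)
  have hftc : ∫ s in b..c, (2 / (c - b) * ‖f s‖ ^ 2 + φ s * (2 * inner ℝ (f s) (fd s)))
      = ‖f b‖ ^ 2 + ‖f c‖ ^ 2 := by
    rw [intervalIntegral.integral_eq_sub_of_hasDerivAt_of_le hb_le_c
      (f := fun s => φ s * ‖f s‖ ^ 2)]
    · simp only [φ]
      field_simp
      ring
    · fun_prop
    · intro s hs
      have hfs : HasDerivAt f (fd s) s := (hf s (Ioo_subset_Icc_self hs)).hasDerivAt
        (Icc_mem_nhds hs.1 hs.2)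
      exact ((hφ s).fun_mul hfs.norm_sq).congr_deriv (by ring)
    · exact hint
  have hW : IntervalIntegrable (fun s => 2 * (‖f s‖ ^ 2 + ‖fd s‖ ^ 2)) volume b c :=
    ContinuousOn.intervalIntegrable_of_Icc hb_le_c (by fun_prop)
  have hpointwise : ∀ s ∈ Icc b c, 2 / (c - b) * ‖f s‖ ^ 2 + φ s * (2 * inner ℝ (f s) (fd s))
      ≤ 2 * (‖f s‖ ^ 2 + ‖fd s‖ ^ 2) := fun s hs => by
    have hweight : 2 / (c - b) * ‖f s‖ ^ 2 ≤ ‖f s‖ ^ 2 :=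
      mul_le_of_le_one_left (by positivity) ((div_le_one hcb).2 hbc)
    linarith [mul_two_mul_real_inner_le (hφ_abs s hs) (f s) (fd s), sq_nonneg ‖fd s‖]
  calc ‖f b‖ ^ 2 + ‖f c‖ ^ 2
      = ∫ s in b..c, (2 / (c - b) * ‖f s‖ ^ 2 + φ s * (2 * inner ℝ (f s) (fd s))) := hftc.symm
    _ ≤ ∫ s in b..c, 2 * (‖f s‖ ^ 2 + ‖fd s‖ ^ 2) :=
        intervalIntegral.integral_mono_on hb_le_c hint hW hpointwise
    _ = 2 * ∫ s in b..c, (‖f s‖ ^ 2 + ‖fd s‖ ^ 2) := intervalIntegral.integral_const_mul _ _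

theorem hasDerivAt_exp_neg_add_mul_mul (c a v s : ℝ) :
    HasDerivAt (fun u => Real.exp (-(u + c) * a) * v) (-(a * (Real.exp (-(s + c) * a) * v))) s :=
  ((((hasDerivAt_id' s).add_const c).fun_neg.mul_const a).exp.mul_const v).congr_deriv (by ring)

section SplitSolution

variable {n k : ℕ} {a : Fin n → ℝ} {T : ℝ} {ζ ζE : ℝ → EuclideanSpace ℝ (Fin n)}

theorem hasDerivAt_apply_of_eq_ite
    (hζE : ∀ s, ∀ i : Fin n,
      ζE s i = if (i : ℕ) < n - k then Real.exp (-(s + T) * a i) * ζ (-T) i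
               else Real.exp (-(s - T) * a i) * ζ T i) (i : Fin n) (s : ℝ) :
    HasDerivAt (fun u => ζE u i) (-(a i * ζE s i)) s := by
  simp only [hζE]
  split_ifs
  · exact hasDerivAt_exp_neg_add_mul_mul T (a i) _ s
  · simpa only [sub_eq_add_neg] using hasDerivAt_exp_neg_add_mul_mul (-T) (a i) _ s

theorem integral_norm_sq_le_of_eq_ite
    (hζE : ∀ s, ∀ i : Fin n,
      ζE s i = if (i : ℕ) < n - k then Real.exp (-(s + T) * a i) * ζ (-T) i
               else Real.exp (-(s - T) * a i) * ζ T i)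
    (ha_pos : ∀ i : Fin n, (i : ℕ) < n - k → 0 < a i)
    (ha_neg : ∀ i : Fin n, n - k ≤ (i : ℕ) → a i < 0)
    {σ : ℝ} (hσ : 0 < σ) (hσ_le : ∀ i, σ ≤ |a i|) :
    ∫ s in (-T)..T, ‖ζE s‖ ^ 2 ≤ (‖ζ (-T)‖ ^ 2 + ‖ζ T‖ ^ 2) / (2 * σ) := by
  have hcomp := hasDerivAt_apply_of_eq_ite hζE
  have hcont : ∀ i, Continuous fun s => ζE s i := fun i =>
    continuous_iff_continuousAt.2 fun s => (hcomp i s).continuousAt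
  simp only [EuclideanSpace.real_norm_sq_eq]
  rw [intervalIntegral.integral_finsetSum (f := fun i s => ζE s i ^ 2)
      fun i _ => ((hcont i).pow 2).intervalIntegrable _ _,
    ← Finset.sum_add_distrib, Finset.sum_div]
  refine Finset.sum_le_sum fun i _ => ?_
  by_cases h : (i : ℕ) < n - k
  · have hσ_a : σ ≤ a i := (hσ_le i).trans_eq (abs_of_pos (ha_pos i h))
    calc ∫ s in (-T)..T, ζE s i ^ 2
        ≤ ζE (-T) i ^ 2 / (2 * a i) :=
          integral_sq_le_of_hasDerivAt_neg_mul_of_pos (ha_pos i h) (hcomp i) _ _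
      _ = ζ (-T) i ^ 2 / (2 * a i) := by simp [hζE, h]
      _ ≤ ζ (-T) i ^ 2 / (2 * σ) := by gcongr
      _ ≤ (ζ (-T) i ^ 2 + ζ T i ^ 2) / (2 * σ) := by gcongr; linarith [sq_nonneg (ζ T i)]
  · have hneg := ha_neg i (not_lt.1 h)
    have hσ_a : σ ≤ -a i := (hσ_le i).trans_eq (abs_of_neg hneg)
    calc ∫ s in (-T)..T, ζE s i ^ 2
        ≤ ζE T i ^ 2 / (2 * -a i) :=
          integral_sq_le_of_hasDerivAt_neg_mul_of_neg hneg (hcomp i) _ _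
      _ = ζ T i ^ 2 / (2 * -a i) := by simp [hζE, h]
      _ ≤ ζ T i ^ 2 / (2 * σ) := by gcongr
      _ ≤ (ζ (-T) i ^ 2 + ζ T i ^ 2) / (2 * σ) := by gcongr; linarith [sq_nonneg (ζ (-T) i)]

end SplitSolution

/-- **Uniform bound for the projection onto the solution space along the chosen
complement.** Let `A = diag(a₁,…,aₙ)` with
`a₁ ≥ … ≥ a_{n-k} > 0 > a_{n-k+1} ≥ … ≥ aₙ` and spectral gap
`σ = min_ℓ |a_ℓ|`.  Let `T ≥ 1` and `ζ : [-T,T] → ℝⁿ` continuously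
differentiable.  Define `ζ_E(s) := (e^{-(s+T)A₊} p₊ ζ(-T), e^{(s-T)A₋} p₋ ζ(T))`.
Then `ζ_E` solves `ζ_E' + A ζ_E = 0` and
`‖ζ_E‖²_{W^{1,2}} ≤ (4 max{1+a₁², 1+aₙ²}/σ) ‖ζ‖²_{W^{1,2}}`;
in particular the projection `ζ ↦ ζ_E` is bounded by a constant depending only
on `a₁, aₙ`, independent of `T`. -/
theorem projection_uniform_bound (n k : ℕ) (hn : 1 ≤ n)
    (a : Fin n → ℝ)
    (ha_mono : ∀ i j : Fin n, i ≤ j → a j ≤ a i)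
    (ha_pos : ∀ i : Fin n, (i : ℕ) < n - k → 0 < a i)
    (ha_neg : ∀ i : Fin n, n - k ≤ (i : ℕ) → a i < 0)
    (σ : ℝ) (hσ : σ = ⨅ i : Fin n, |a i|)
    (T : ℝ) (hT : 1 ≤ T)
    (ζ ζd : ℝ → EuclideanSpace ℝ (Fin n))
    (hζ : ∀ s ∈ Icc (-T) T, HasDerivWithinAt ζ (ζd s) (Icc (-T) T) s)
    (hζd : ContinuousOn ζd (Icc (-T) T))
    (ζE ζEd : ℝ → EuclideanSpace ℝ (Fin n))
    (hζE : ∀ s, ∀ i : Fin n,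
      ζE s i = if (i : ℕ) < n - k then Real.exp (-(s + T) * a i) * ζ (-T) i
               else Real.exp (-(s - T) * a i) * ζ T i)
    (hζEd : ∀ s, ∀ i : Fin n, ζEd s i = -(a i * ζE s i)) :
    (∀ s : ℝ, HasDerivAt ζE (ζEd s) s) ∧
    (∫ s in (-T)..T, (‖ζE s‖ ^ 2 + ‖ζEd s‖ ^ 2)) ≤
      (4 * max (1 + (a ⟨0, by omega⟩) ^ 2) (1 + (a ⟨n - 1, by omega⟩) ^ 2) / σ) *
        ∫ s in (-T)..T, (‖ζ s‖ ^ 2 + ‖ζd s‖ ^ 2) := by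
  set M := max (1 + (a ⟨0, by omega⟩) ^ 2) (1 + (a ⟨n - 1, by omega⟩) ^ 2)
  have hM : ∀ i, 1 + a i ^ 2 ≤ M := one_add_sq_le_max_of_antitone ha_mono
    (fun i => Fin.le_def.2 (Nat.zero_le _)) (fun i => Fin.le_def.2 (Nat.le_sub_one_of_lt i.isLt))
  have : Nonempty (Fin n) := ⟨⟨0, hn⟩⟩
  have hσ_le : ∀ i, σ ≤ |a i| := fun i => hσ ▸ ciInf_le (finite_range _).bddBelow i
  have hσ_pos : 0 < σ := hσ ▸ lt_ciInf_of_finite fun i => abs_pos.2 <|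
    (lt_or_ge (i : ℕ) (n - k)).elim (fun h => (ha_pos i h).ne') fun h => (ha_neg i h).ne
  have hcomp := hasDerivAt_apply_of_eq_ite hζE
  have hderiv : ∀ s, HasDerivAt ζE (ζEd s) s := fun s =>
    EuclideanSpace.hasDerivAt_of_apply fun i => hζEd s i ▸ hcomp i s
  refine ⟨hderiv, ?_⟩
  have hζE_cont : Continuous ζE := continuous_iff_continuousAt.2 fun s => (hderiv s).continuousAt
  have hM_nonneg : 0 ≤ M := (by positivity : (0 : ℝ) ≤ 1 + a ⟨0, hn⟩ ^ 2).trans (hM _)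
  have hW_nonneg : 0 ≤ ∫ s in (-T)..T, (‖ζ s‖ ^ 2 + ‖ζd s‖ ^ 2) :=
    intervalIntegral.integral_nonneg (by linarith) fun s _ => by positivity
  have hζE_int := integral_norm_sq_le_of_eq_ite hζE ha_pos ha_neg hσ_pos hσ_le
  have htrace := sq_norm_add_sq_norm_le_two_mul_integral (by linarith) hζ hζd
  calc ∫ s in (-T)..T, (‖ζE s‖ ^ 2 + ‖ζEd s‖ ^ 2)
      ≤ M * ∫ s in (-T)..T, ‖ζE s‖ ^ 2 :=
        integral_norm_sq_add_norm_sq_le_mul hM hζE_cont hζEd (by linarith)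
    _ ≤ M * ((‖ζ (-T)‖ ^ 2 + ‖ζ T‖ ^ 2) / (2 * σ)) := by gcongr
    _ ≤ M * (2 * (∫ s in (-T)..T, (‖ζ s‖ ^ 2 + ‖ζd s‖ ^ 2)) / (2 * σ)) := by gcongr
    _ = M / σ * ∫ s in (-T)..T, (‖ζ s‖ ^ 2 + ‖ζd s‖ ^ 2) := by field_simp
    _ ≤ 4 * M / σ * ∫ s in (-T)..T, (‖ζ s‖ ^ 2 + ‖ζd s‖ ^ 2) := by gcongr; linarith
end

section
/- Two-sided norm bound for the infinitesimal gluing map: let T ≥ 3, x₀ ∈ ℝ^{n−k} and y₀ ∈ ℝ^k. Define ξ(s) := (e^{−sA₊}x₀, 0) for s ≥ 0, η(s) := (0, e^{sA₋}y₀) for s ≤ 0, and ζ(s) := (e^{−(s+T)A₊}x₀, e^{(s−T)A₋}y₀) for s ∈ [−T,T]. Then (1 − e^{−12σ}) · (‖ξ‖²_{W^{1,2}([0,∞))} + ‖η‖²_{W^{1,2}((−∞,0])}) ≤ ‖ζ‖²_{W^{1,2}([−T,T])} ≤ ‖ξ‖²_{W^{1,2}([0,∞))} + ‖η‖²_{W^{1,2}((−∞,0])}.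 In particular the linear map Γ_T : (x₀,y₀) ↦ ζ is injective with norm at most 1 and inverse bounded uniformly in T. -/
/-!
The curves `ξ` and `s ↦ η (-s)` are diagonal exponential flows whose nonzero coordinates decay at
rate at least `σ`, so their energy densities `f = ‖γ‖² + ‖γ'‖²` satisfy
`f (s + r) ≤ e^{-2σr} f s`. Hence the part of `∫₀^∞ f` beyond `2T` is at most
`e^{-4σT} ≤ e^{-12σ}` times the whole, which gives both bounds for `∫₀^{2T} f`. Since `x₀` and
`y₀` have disjoint supports, `ζ(s) = ξ(s + T) + η(s - T)` is an orthogonal sum, and the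
`ζ`-energy on `[-T, T]` is the `ξ`-energy on `[0, 2T]` plus the `η`-energy on `[-2T, 0]`.
-/

open Set MeasureTheory Real

theorem integral_comp_add_right_Ioi {E : Type*} [NormedAddCommGroup E] [NormedSpace ℝ E]
    (f : ℝ → E) (t : ℝ) :
    ∫ s in Ioi 0, f (s + t) = ∫ s in Ioi t, f s := by
  have h := (measurePreserving_add_right volume t).setIntegral_preimage_emb
    (measurableEmbedding_addRight t) f (Ioi t)
  simpa [preimage_add_const_Ioi] using h

theorem integrableOn_Ioi_of_exp_decay {f : ℝ → ℝ} {ρ : ℝ} (hf : Continuous f) (hρ : 0 < ρ)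
    (hf_nonneg : ∀ s, 0 ≤ s → 0 ≤ f s) (hf_decay : ∀ r, 0 ≤ r → f r ≤ exp (-(ρ * r)) * f 0) :
    IntegrableOn f (Ioi 0) := by
  refine Integrable.mono' ((exp_neg_integrableOn_Ioi 0 hρ).mul_const (f 0))
    hf.aestronglyMeasurable ?_
  filter_upwards [self_mem_ae_restrict measurableSet_Ioi] with s hs
  rw [Real.norm_of_nonneg (hf_nonneg s hs.le), neg_mul]
  exact hf_decay s hs.le

theorem setIntegral_Ioi_le_of_shift_le {f : ℝ → ℝ} {c t : ℝ} (hf : IntegrableOn f (Ioi 0))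
    (ht : 0 ≤ t) (hf_nonneg : ∀ s, 0 ≤ s → 0 ≤ f s)
    (hf_shift : ∀ s, 0 ≤ s → f (s + t) ≤ c * f s) :
    ∫ s in Ioi t, f s ≤ c * ∫ s in Ioi 0, f s := by
  rw [← integral_comp_add_right_Ioi, ← integral_const_mul]
  refine integral_mono_of_nonneg ?_ (hf.const_mul c) ?_
  · filter_upwards [self_mem_ae_restrict measurableSet_Ioi] with s hs
    exact hf_nonneg _ (by linarith [mem_Ioi.mp hs])
  · filter_upwards [self_mem_ae_restrict measurableSet_Ioi] with s hs
    exact hf_shift s hs.le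

theorem intervalIntegral_bounds_of_exp_decay {f : ℝ → ℝ} {ρ t : ℝ} (hf : Continuous f)
    (hρ : 0 < ρ) (ht : 0 ≤ t) (hf_nonneg : ∀ s, 0 ≤ s → 0 ≤ f s)
    (hf_decay : ∀ s r, 0 ≤ s → 0 ≤ r → f (s + r) ≤ exp (-(ρ * r)) * f s) :
    (1 - exp (-(ρ * t))) * ∫ s in Ioi 0, f s ≤ ∫ s in 0..t, f s ∧
      ∫ s in 0..t, f s ≤ ∫ s in Ioi 0, f s := by
  have hint : IntegrableOn f (Ioi 0) :=
    integrableOn_Ioi_of_exp_decay hf hρ hf_nonneg fun r hr => by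
      simpa using hf_decay 0 r le_rfl hr
  have hsplit := intervalIntegral.integral_Ioi_sub_Ioi hint ht
  have htail := setIntegral_Ioi_le_of_shift_le hint ht hf_nonneg fun s hs => hf_decay s t hs ht
  have htail_nonneg : 0 ≤ ∫ s in Ioi t, f s :=
    setIntegral_nonneg measurableSet_Ioi fun s hs => hf_nonneg s (ht.trans hs.le)
  constructor <;> linarith

theorem intervalIntegral_comp_add_add_comp_sub {f g : ℝ → ℝ} (hf : Continuous f)
    (hg : Continuous g) (T : ℝ) :
    ∫ s in (-T)..T, (f (s + T) + g (s - T)) =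
      (∫ s in 0..2 * T, f s) + ∫ s in (-(2 * T))..0, g s := by
  rw [intervalIntegral.integral_add
    ((by fun_prop : Continuous fun s => f (s + T)).intervalIntegrable _ _)
    ((by fun_prop : Continuous fun s => g (s - T)).intervalIntegrable _ _),
    intervalIntegral.integral_comp_add_right, intervalIntegral.integral_comp_sub_right]
  ring_nf

section DiagonalFlow

variable {ι : Type*} [Fintype ι]

theorem EuclideanSpace.norm_le_of_forall_abs_le {v w : EuclideanSpace ℝ ι} {c : ℝ}
    (hc : 0 ≤ c) (h : ∀ i, |w i| ≤ c * |v i|) : ‖w‖ ≤ c * ‖v‖ := by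
  refine le_of_sq_le_sq ?_ (by positivity)
  rw [mul_pow, EuclideanSpace.real_norm_sq_eq, EuclideanSpace.real_norm_sq_eq, Finset.mul_sum]
  refine Finset.sum_le_sum fun i _ => ?_
  rw [← sq_abs (w i), ← sq_abs (v i), ← mul_pow]
  exact pow_le_pow_left₀ (abs_nonneg _) (h i) 2

theorem EuclideanSpace.norm_add_sq_of_mul_eq_zero {v w : EuclideanSpace ℝ ι}
    (h : ∀ i, v i * w i = 0) : ‖v + w‖ ^ 2 = ‖v‖ ^ 2 + ‖w‖ ^ 2 := by
  have horth : inner ℝ v w = 0 := by simp [PiLp.inner_apply, h, mul_comm]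
  rw [norm_add_sq_real, horth]
  ring

omit [Fintype ι] in
theorem continuous_of_diagonal_flow {γ : ℝ → EuclideanSpace ℝ ι} {b v : ι → ℝ}
    (hγ : ∀ s i, γ s i = exp (-(s * b i)) * v i) : Continuous γ := by
  have : γ = fun s => WithLp.toLp 2 (fun i => exp (-(s * b i)) * v i) := by
    funext s; ext i; simp [hγ]
  rw [this]
  fun_prop

theorem norm_diagonal_flow_add_le {γ : ℝ → EuclideanSpace ℝ ι} {b v : ι → ℝ} {σ : ℝ}
    (hγ : ∀ s i, γ s i = exp (-(s * b i)) * v i) (hb : ∀ i, v i ≠ 0 → σ ≤ b i)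
    (s : ℝ) {r : ℝ} (hr : 0 ≤ r) : ‖γ (s + r)‖ ≤ exp (-(σ * r)) * ‖γ s‖ := by
  refine EuclideanSpace.norm_le_of_forall_abs_le (exp_nonneg _) fun i => ?_
  have hshift : γ (s + r) i = exp (-(r * b i)) * γ s i := by
    rw [hγ, hγ, ← mul_assoc, ← exp_add]; ring_nf
  rw [hshift, abs_mul, abs_of_pos (exp_pos _)]
  by_cases hv : v i = 0
  · simp [hγ, hv]
  · exact mul_le_mul_of_nonneg_right (exp_le_exp.mpr (by nlinarith [hb i hv])) (abs_nonneg _)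

variable {γ γd : ℝ → EuclideanSpace ℝ ι} {b c v : ι → ℝ} {σ t : ℝ}

theorem continuous_energy_of_diagonal_flow (hγ : ∀ s i, γ s i = exp (-(s * b i)) * v i)
    (hγd : ∀ s i, γd s i = -(c i * γ s i)) : Continuous fun s => ‖γ s‖ ^ 2 + ‖γd s‖ ^ 2 := by
  have := continuous_of_diagonal_flow hγ
  have := continuous_of_diagonal_flow (v := fun i => -(c i * v i)) fun s i => by
    rw [hγd, hγ]; ring
  fun_prop

theorem diagonal_flow_energy_bounds_Ioi (hσ : 0 < σ) (ht : 0 ≤ t)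
    (hγ : ∀ s i, γ s i = exp (-(s * b i)) * v i) (hγd : ∀ s i, γd s i = -(c i * γ s i))
    (hb : ∀ i, v i ≠ 0 → σ ≤ b i) :
    (1 - exp (-(2 * σ * t))) * ∫ s in Ioi 0, (‖γ s‖ ^ 2 + ‖γd s‖ ^ 2) ≤
        ∫ s in 0..t, (‖γ s‖ ^ 2 + ‖γd s‖ ^ 2) ∧
      ∫ s in 0..t, (‖γ s‖ ^ 2 + ‖γd s‖ ^ 2) ≤ ∫ s in Ioi 0, (‖γ s‖ ^ 2 + ‖γd s‖ ^ 2) := by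
  have hγd' : ∀ s i, γd s i = exp (-(s * b i)) * -(c i * v i) := fun s i => by
    rw [hγd, hγ]; ring
  have hbd : ∀ i, -(c i * v i) ≠ 0 → σ ≤ b i := fun i h =>
    hb i (right_ne_zero_of_mul (neg_ne_zero.mp h))
  refine intervalIntegral_bounds_of_exp_decay (continuous_energy_of_diagonal_flow hγ hγd)
    (by positivity) ht (fun s _ => by positivity) fun s r _ hr => ?_
  have hsq : exp (-(2 * σ * r)) = exp (-(σ * r)) ^ 2 := by rw [← exp_nat_mul]; ring_nf
  rw [hsq, mul_add, ← mul_pow, ← mul_pow]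
  gcongr
  · exact norm_diagonal_flow_add_le hγ hb s hr
  · exact norm_diagonal_flow_add_le hγd' hbd s hr

theorem diagonal_flow_energy_bounds_Iio (hσ : 0 < σ) (ht : 0 ≤ t)
    (hγ : ∀ s i, γ s i = exp (-(s * b i)) * v i) (hγd : ∀ s i, γd s i = -(c i * γ s i))
    (hb : ∀ i, v i ≠ 0 → σ ≤ -b i) :
    (1 - exp (-(2 * σ * t))) * ∫ s in Iio 0, (‖γ s‖ ^ 2 + ‖γd s‖ ^ 2) ≤
        ∫ s in (-t)..0, (‖γ s‖ ^ 2 + ‖γd s‖ ^ 2) ∧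
      ∫ s in (-t)..0, (‖γ s‖ ^ 2 + ‖γd s‖ ^ 2) ≤ ∫ s in Iio 0, (‖γ s‖ ^ 2 + ‖γd s‖ ^ 2) := by
  have hreflect := diagonal_flow_energy_bounds_Ioi (γ := fun s => γ (-s))
    (γd := fun s => γd (-s)) hσ ht (fun s i => by rw [hγ]; ring_nf) (fun s => hγd (-s)) hb
  have hIoi := integral_comp_neg_Ioi 0 fun s => ‖γ s‖ ^ 2 + ‖γd s‖ ^ 2
  have hIcc := intervalIntegral.integral_comp_neg (a := 0) (b := t)
    fun s => ‖γ s‖ ^ 2 + ‖γd s‖ ^ 2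
  rw [neg_zero] at hIoi hIcc
  rwa [hIoi, hIcc, ← setIntegral_congr_set Iio_ae_eq_Iic] at hreflect

theorem energy_gluing {ξ ξd η ηd ζ ζd : ℝ → EuclideanSpace ℝ ι} {a : ι → ℝ}
    {x₀ y₀ : EuclideanSpace ℝ ι} {T : ℝ} (hxy : ∀ i, x₀ i * y₀ i = 0)
    (hξ : ∀ s i, ξ s i = exp (-(s * a i)) * x₀ i) (hξd : ∀ s i, ξd s i = -(a i * ξ s i))
    (hη : ∀ s i, η s i = exp (-(s * a i)) * y₀ i) (hηd : ∀ s i, ηd s i = -(a i * η s i))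
    (hζ : ∀ s i, ζ s i = exp (-((s + T) * a i)) * x₀ i + exp (-((s - T) * a i)) * y₀ i)
    (hζd : ∀ s i, ζd s i = -(a i * ζ s i)) (s : ℝ) :
    ‖ζ s‖ ^ 2 + ‖ζd s‖ ^ 2 =
      (‖ξ (s + T)‖ ^ 2 + ‖ξd (s + T)‖ ^ 2) + (‖η (s - T)‖ ^ 2 + ‖ηd (s - T)‖ ^ 2) := by
  have hζ_eq : ζ s = ξ (s + T) + η (s - T) := by ext i; simp [hζ, hξ, hη]
  have hζd_eq : ζd s = ξd (s + T) + ηd (s - T) := by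
    ext i; simp only [PiLp.add_apply, hζd, hξd, hηd, hζ_eq]; ring
  have horth : ∀ i, ξ (s + T) i * η (s - T) i = 0 := fun i => by
    rw [hξ, hη, mul_mul_mul_comm, hxy, mul_zero]
  have horth_d : ∀ i, ξd (s + T) i * ηd (s - T) i = 0 := fun i => by
    rw [hξd, hηd, neg_mul_neg, mul_mul_mul_comm, horth, mul_zero]
  rw [hζ_eq, hζd_eq, EuclideanSpace.norm_add_sq_of_mul_eq_zero horth,
    EuclideanSpace.norm_add_sq_of_mul_eq_zero horth_d]
  ring

end DiagonalFlow

theorem ciInf_abs_pos {ι : Type*} [Finite ι] [Nonempty ι] {a : ι → ℝ} (ha : ∀ i, a i ≠ 0) :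
    0 < ⨅ i, |a i| := by
  obtain ⟨j, hj⟩ := exists_eq_ciInf_of_finite (f := fun i => |a i|)
  exact hj ▸ abs_pos.mpr (ha j)

section Blocks

variable {n k : ℕ} {a : Fin n → ℝ} {σ : ℝ} {v w : EuclideanSpace ℝ (Fin n)}

theorem le_of_ne_zero_of_upper_block (hσ : ∀ i, σ ≤ |a i|)
    (ha_pos : ∀ i : Fin n, (i : ℕ) < n - k → 0 < a i)
    (hv : ∀ i : Fin n, n - k ≤ (i : ℕ) → v i = 0) (i : Fin n) (hvi : v i ≠ 0) : σ ≤ a i :=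
  (hσ i).trans_eq (abs_of_pos (ha_pos i (not_le.mp (mt (hv i) hvi))))

theorem le_neg_of_ne_zero_of_lower_block (hσ : ∀ i, σ ≤ |a i|)
    (ha_neg : ∀ i : Fin n, n - k ≤ (i : ℕ) → a i < 0)
    (hw : ∀ i : Fin n, (i : ℕ) < n - k → w i = 0) (i : Fin n) (hwi : w i ≠ 0) : σ ≤ -a i :=
  (hσ i).trans_eq (abs_of_neg (ha_neg i (not_lt.mp (mt (hw i) hwi))))

theorem mul_eq_zero_of_blocks (hv : ∀ i : Fin n, n - k ≤ (i : ℕ) → v i = 0)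
    (hw : ∀ i : Fin n, (i : ℕ) < n - k → w i = 0) (i : Fin n) : v i * w i = 0 := by
  rcases lt_or_ge (i : ℕ) (n - k) with h | h
  · rw [hw i h, mul_zero]
  · rw [hv i h, zero_mul]

end Blocks

theorem infinitesimal_gluing_two_sided_bound_general (n k : ℕ) (hn : 1 ≤ n)
    (a : Fin n → ℝ)
    (ha_pos : ∀ i : Fin n, (i : ℕ) < n - k → 0 < a i)
    (ha_neg : ∀ i : Fin n, n - k ≤ (i : ℕ) → a i < 0)
    (σ : ℝ) (hσ : σ = ⨅ i : Fin n, |a i|)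
    (T : ℝ) (hT : 3 ≤ T)
    (x₀ y₀ : EuclideanSpace ℝ (Fin n))
    (hx₀ : ∀ i : Fin n, n - k ≤ (i : ℕ) → x₀ i = 0)
    (hy₀ : ∀ i : Fin n, (i : ℕ) < n - k → y₀ i = 0)
    (ξ ξd η ηd ζ ζd : ℝ → EuclideanSpace ℝ (Fin n))
    (hξ : ∀ s, ∀ i : Fin n, ξ s i = Real.exp (-(s * a i)) * x₀ i)
    (hξd : ∀ s, ∀ i : Fin n, ξd s i = -(a i * ξ s i))
    (hη : ∀ s, ∀ i : Fin n, η s i = Real.exp (-(s * a i)) * y₀ i)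
    (hηd : ∀ s, ∀ i : Fin n, ηd s i = -(a i * η s i))
    (hζ : ∀ s, ∀ i : Fin n,
      ζ s i = Real.exp (-((s + T) * a i)) * x₀ i + Real.exp (-((s - T) * a i)) * y₀ i)
    (hζd : ∀ s, ∀ i : Fin n, ζd s i = -(a i * ζ s i)) :
    (1 - Real.exp (-(12 * σ))) *
        ((∫ s in Ioi (0:ℝ), (‖ξ s‖ ^ 2 + ‖ξd s‖ ^ 2)) +
         (∫ s in Iio (0:ℝ), (‖η s‖ ^ 2 + ‖ηd s‖ ^ 2))) ≤
      (∫ s in (-T)..T, (‖ζ s‖ ^ 2 + ‖ζd s‖ ^ 2)) ∧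
    (∫ s in (-T)..T, (‖ζ s‖ ^ 2 + ‖ζd s‖ ^ 2)) ≤
      (∫ s in Ioi (0:ℝ), (‖ξ s‖ ^ 2 + ‖ξd s‖ ^ 2)) +
      (∫ s in Iio (0:ℝ), (‖η s‖ ^ 2 + ‖ηd s‖ ^ 2)) := by
  have hσ_le : ∀ i, σ ≤ |a i| := fun i => hσ ▸ ciInf_le (Finite.bddBelow_range _) i
  have hσ_pos : 0 < σ := by
    have : Nonempty (Fin n) := ⟨⟨0, hn⟩⟩
    refine hσ ▸ ciInf_abs_pos fun i => ?_
    rcases lt_or_ge (i : ℕ) (n - k) with h | h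
    exacts [(ha_pos i h).ne', (ha_neg i h).ne]
  have h2T : 0 ≤ 2 * T := by linarith
  obtain ⟨hξ_lower, hξ_upper⟩ := diagonal_flow_energy_bounds_Ioi hσ_pos h2T hξ hξd
    (le_of_ne_zero_of_upper_block hσ_le ha_pos hx₀)
  obtain ⟨hη_lower, hη_upper⟩ := diagonal_flow_energy_bounds_Iio hσ_pos h2T hη hηd
    (le_neg_of_ne_zero_of_lower_block hσ_le ha_neg hy₀)
  have hζ_int : ∫ s in (-T)..T, (‖ζ s‖ ^ 2 + ‖ζd s‖ ^ 2) =
      (∫ s in 0..2 * T, (‖ξ s‖ ^ 2 + ‖ξd s‖ ^ 2)) +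
        ∫ s in (-(2 * T))..0, (‖η s‖ ^ 2 + ‖ηd s‖ ^ 2) := by
    simp_rw [energy_gluing (mul_eq_zero_of_blocks hx₀ hy₀) hξ hξd hη hηd hζ hζd]
    exact intervalIntegral_comp_add_add_comp_sub (continuous_energy_of_diagonal_flow hξ hξd)
      (continuous_energy_of_diagonal_flow hη hηd) T
  have hgap : exp (-(2 * σ * (2 * T))) ≤ exp (-(12 * σ)) := exp_le_exp.mpr (by nlinarith)
  have hξ_nonneg : 0 ≤ ∫ s in Ioi 0, (‖ξ s‖ ^ 2 + ‖ξd s‖ ^ 2) :=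
    setIntegral_nonneg measurableSet_Ioi fun s _ => by positivity
  have hη_nonneg : 0 ≤ ∫ s in Iio 0, (‖η s‖ ^ 2 + ‖ηd s‖ ^ 2) :=
    setIntegral_nonneg measurableSet_Iio fun s _ => by positivity
  rw [hζ_int]
  constructor
  · nlinarith
  · linarith

/-- **Two-sided norm bound for the infinitesimal gluing map.** Let
`A = diag(a₁,…,aₙ)` with `a₁ ≥ … ≥ a_{n-k} > 0 > a_{n-k+1} ≥ … ≥ aₙ` and
spectral gap `σ = min_ℓ |a_ℓ|`.  Let `T ≥ 3`, `x₀ ∈ ℝ^{n-k}`, `y₀ ∈ ℝ^k`.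
With `ξ(s) = (e^{-sA₊} x₀, 0)`, `η(s) = (0, e^{sA₋} y₀)` and
`ζ(s) = (e^{-(s+T)A₊} x₀, e^{(s-T)A₋} y₀)` one has
`(1 - e^{-12σ}) (‖ξ‖² + ‖η‖²) ≤ ‖ζ‖²_{W^{1,2}([-T,T])} ≤ ‖ξ‖² + ‖η‖²`
(with the `W^{1,2}`-norms of `ξ`, `η` over `[0,∞)` resp. `(-∞,0]`).
In particular the infinitesimal gluing map `Γ_T : (x₀,y₀) ↦ ζ` is an injection
of norm at most `1` whose inverse is bounded uniformly in `T`. -/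
theorem infinitesimal_gluing_two_sided_bound (n k : ℕ) (hn : 1 ≤ n) (hkn : k ≤ n)
    (a : Fin n → ℝ)
    (ha_mono : ∀ i j : Fin n, i ≤ j → a j ≤ a i)
    (ha_pos : ∀ i : Fin n, (i : ℕ) < n - k → 0 < a i)
    (ha_neg : ∀ i : Fin n, n - k ≤ (i : ℕ) → a i < 0)
    (σ : ℝ) (hσ : σ = ⨅ i : Fin n, |a i|)
    (T : ℝ) (hT : 3 ≤ T)
    (x₀ y₀ : EuclideanSpace ℝ (Fin n))
    (hx₀ : ∀ i : Fin n, n - k ≤ (i : ℕ) → x₀ i = 0)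
    (hy₀ : ∀ i : Fin n, (i : ℕ) < n - k → y₀ i = 0)
    (ξ ξd η ηd ζ ζd : ℝ → EuclideanSpace ℝ (Fin n))
    (hξ : ∀ s, ∀ i : Fin n, ξ s i = Real.exp (-(s * a i)) * x₀ i)
    (hξd : ∀ s, ∀ i : Fin n, ξd s i = -(a i * ξ s i))
    (hη : ∀ s, ∀ i : Fin n, η s i = Real.exp (-(s * a i)) * y₀ i)
    (hηd : ∀ s, ∀ i : Fin n, ηd s i = -(a i * η s i))
    (hζ : ∀ s, ∀ i : Fin n,
      ζ s i = Real.exp (-((s + T) * a i)) * x₀ i + Real.exp (-((s - T) * a i)) * y₀ i)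
    (hζd : ∀ s, ∀ i : Fin n, ζd s i = -(a i * ζ s i)) :
    (1 - Real.exp (-(12 * σ))) *
        ((∫ s in Ioi (0:ℝ), (‖ξ s‖ ^ 2 + ‖ξd s‖ ^ 2)) +
         (∫ s in Iio (0:ℝ), (‖η s‖ ^ 2 + ‖ηd s‖ ^ 2))) ≤
      (∫ s in (-T)..T, (‖ζ s‖ ^ 2 + ‖ζd s‖ ^ 2)) ∧
    (∫ s in (-T)..T, (‖ζ s‖ ^ 2 + ‖ζd s‖ ^ 2)) ≤
      (∫ s in Ioi (0:ℝ), (‖ξ s‖ ^ 2 + ‖ξd s‖ ^ 2)) +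
      (∫ s in Iio (0:ℝ), (‖η s‖ ^ 2 + ‖ηd s‖ ^ 2)) :=
  infinitesimal_gluing_two_sided_bound_general n k hn a ha_pos ha_neg σ hσ T hT x₀ y₀ hx₀ hy₀ ξ ξd η
    ηd ζ ζd hξ hξd hη hηd hζ hζd
end

section
/- Unique solvability of the boundary value problem for the linearized gradient operator: for every T > 0 and every continuous map η : [−T,T] → ℝⁿ there exists a unique continuously differentiable map ζ : [−T,T] → ℝⁿ such that ζ′(s) + A ζ(s) = η(s) for all s ∈ [−T,T], p₊ζ(−T) = 0, and p₋ζ(T) = 0. -/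
open Set

/-!
The system `ζ' + A ζ = η` is diagonal, so it decouples into the scalar equations
`ζᵢ' + aᵢ ζᵢ = ηᵢ`, each carrying exactly one boundary condition: at `-T` for `i < n - k`
and at `T` otherwise. A scalar first-order linear equation with one prescribed value is
uniquely solvable on any interval containing that point: variation of constants gives a
solution, and uniqueness holds because the right-hand side is Lipschitz in the unknown.
-/

section LinearScalarODE

variable {a l u c : ℝ} {g y₁ y₂ : ℝ → ℝ}

/-- Variation of constants: the solution of `y' + a y = g` with `y c = 0`. -/
noncomputable def linearODESolution (a c : ℝ) (g : ℝ → ℝ) (s : ℝ) : ℝ :=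
  Real.exp (-(a * s)) * ∫ t in c..s, Real.exp (a * t) * g t

@[simp]
lemma linearODESolution_self (a c : ℝ) (g : ℝ → ℝ) : linearODESolution a c g c = 0 := by
  simp [linearODESolution]

lemma hasDerivAt_linearODESolution (a c : ℝ) (hg : Continuous g) (s : ℝ) :
    HasDerivAt (linearODESolution a c g) (g s - a * linearODESolution a c g s) s := by
  have hint : HasDerivAt (fun s => ∫ t in c..s, Real.exp (a * t) * g t)
      (Real.exp (a * s) * g s) s :=
    ((Real.continuous_exp.comp (continuous_const_mul a)).mul hg).integral_hasStrictDerivAt c s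
      |>.hasDerivAt
  have hexp : HasDerivAt (fun s => Real.exp (-(a * s))) (Real.exp (-(a * s)) * -a) s := by
    simpa using ((hasDerivAt_id s).const_mul (-a)).exp
  have hcancel : Real.exp (-(a * s)) * Real.exp (a * s) = 1 := by
    rw [← Real.exp_add, neg_add_cancel, Real.exp_zero]
  refine (hexp.mul hint).congr_deriv ?_
  unfold linearODESolution
  linear_combination g s * hcancel

lemma exists_linearODE_solution_on_Icc (a : ℝ) (hc : c ∈ Icc l u)
    (hg : ContinuousOn g (Icc l u)) :
    ∃ y : ℝ → ℝ, y c = 0 ∧ ∀ s ∈ Icc l u, HasDerivWithinAt y (g s - a * y s) (Icc l u) s := by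
  have hlu : l ≤ u := hc.1.trans hc.2
  set f := IccExtend hlu ((Icc l u).domRestrict g)
  have hf : Continuous f := (continuousOn_iff_continuous_domRestrict.1 hg).Icc_extend'
  refine ⟨linearODESolution a c f, linearODESolution_self a c f, fun s hs => ?_⟩
  have hfs : f s = g s := IccExtend_of_mem hlu _ hs
  rw [← hfs]
  exact (hasDerivAt_linearODESolution a c hf s).hasDerivWithinAt

lemma linearODE_eqOn_Icc (hc : c ∈ Icc l u)
    (hy₁ : ∀ s ∈ Icc l u, HasDerivWithinAt y₁ (g s - a * y₁ s) (Icc l u) s)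
    (hy₂ : ∀ s ∈ Icc l u, HasDerivWithinAt y₂ (g s - a * y₂ s) (Icc l u) s)
    (hc₁₂ : y₁ c = y₂ c) :
    EqOn y₁ y₂ (Icc l u) := by
  have hlip (s : ℝ) : LipschitzWith ‖a‖₊ fun y => g s - a * y := by
    simpa using (LipschitzWith.const (g s)).sub (lipschitzWith_smul a)
  have hcont₁ := HasDerivWithinAt.continuousOn hy₁
  have hcont₂ := HasDerivWithinAt.continuousOn hy₂
  rw [← Icc_union_Icc_eq_Icc hc.1 hc.2]
  refine EqOn.union ?_ ?_
  · have hsub : Ioc l c ⊆ Icc l u := fun s hs => ⟨hs.1.le, hs.2.trans hc.2⟩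
    have hnhds {s} (hs : s ∈ Ioc l c) : Icc l u ∈ nhdsWithin s (Iic s) :=
      Icc_mem_nhdsLE_of_mem ⟨hs.1, (hsub hs).2⟩
    exact ODE_solution_unique_of_mem_Icc_left (fun s _ => (hlip s).lipschitzOnWith (s := univ))
      (hcont₁.mono (Icc_subset_Icc_right hc.2))
      (fun s hs => (hy₁ s (hsub hs)).mono_of_mem_nhdsWithin (hnhds hs)) (fun _ _ => trivial)
      (hcont₂.mono (Icc_subset_Icc_right hc.2))
      (fun s hs => (hy₂ s (hsub hs)).mono_of_mem_nhdsWithin (hnhds hs)) (fun _ _ => trivial)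
      hc₁₂
  · have hsub : Ico c u ⊆ Icc l u := fun s hs => ⟨hc.1.trans hs.1, hs.2.le⟩
    have hnhds {s} (hs : s ∈ Ico c u) : Icc l u ∈ nhdsWithin s (Ici s) :=
      Icc_mem_nhdsGE_of_mem ⟨(hsub hs).1, hs.2⟩
    exact ODE_solution_unique_of_mem_Icc_right (fun s _ => (hlip s).lipschitzOnWith (s := univ))
      (hcont₁.mono (Icc_subset_Icc_left hc.1))
      (fun s hs => (hy₁ s (hsub hs)).mono_of_mem_nhdsWithin (hnhds hs)) (fun _ _ => trivial)
      (hcont₂.mono (Icc_subset_Icc_left hc.1))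
      (fun s hs => (hy₂ s (hsub hs)).mono_of_mem_nhdsWithin (hnhds hs)) (fun _ _ => trivial)
      hc₁₂

end LinearScalarODE

section DiagonalLinearODE

variable {ι : Type*} {a c : ι → ℝ} {l u : ℝ} {η : ℝ → ι → ℝ}

lemma exists_diagonal_linearODE_solution (hc : ∀ i, c i ∈ Icc l u)
    (hη : ContinuousOn η (Icc l u)) :
    ∃ ζ ζd : ℝ → ι → ℝ,
      (∀ s ∈ Icc l u, HasDerivWithinAt ζ (ζd s) (Icc l u) s) ∧ ContinuousOn ζd (Icc l u) ∧
      (∀ s ∈ Icc l u, ∀ i, ζd s i + a i * ζ s i = η s i) ∧ ∀ i, ζ (c i) i = 0 := by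
  choose y hy₀ hy using fun i =>
    exists_linearODE_solution_on_Icc (a i) (hc i) (continuousOn_pi.1 hη i)
  refine ⟨fun s i => y i s, fun s i => η s i - a i * y i s,
    fun s hs => hasDerivWithinAt_pi.2 fun i => hy i s hs, ?_, fun _ _ _ => sub_add_cancel _ _, hy₀⟩
  exact continuousOn_pi.2 fun i =>
    (continuousOn_pi.1 hη i).sub (continuousOn_const.mul (HasDerivWithinAt.continuousOn (hy i)))

lemma diagonal_linearODE_eqOn_Icc (hc : ∀ i, c i ∈ Icc l u) {ζ₁ ζ₁d ζ₂ ζ₂d : ℝ → ι → ℝ}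
    (hζ₁ : ∀ s ∈ Icc l u, HasDerivWithinAt ζ₁ (ζ₁d s) (Icc l u) s)
    (heq₁ : ∀ s ∈ Icc l u, ∀ i, ζ₁d s i + a i * ζ₁ s i = η s i)
    (hζ₂ : ∀ s ∈ Icc l u, HasDerivWithinAt ζ₂ (ζ₂d s) (Icc l u) s)
    (heq₂ : ∀ s ∈ Icc l u, ∀ i, ζ₂d s i + a i * ζ₂ s i = η s i)
    (hc₁₂ : ∀ i, ζ₁ (c i) i = ζ₂ (c i) i) :
    EqOn ζ₁ ζ₂ (Icc l u) := by
  have hcomp {ζ ζd : ℝ → ι → ℝ} (hζ : ∀ s ∈ Icc l u, HasDerivWithinAt ζ (ζd s) (Icc l u) s)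
      (heq : ∀ s ∈ Icc l u, ∀ i, ζd s i + a i * ζ s i = η s i) (i : ι) :
      ∀ s ∈ Icc l u, HasDerivWithinAt (fun t => ζ t i) (η s i - a i * ζ s i) (Icc l u) s :=
    fun s hs => by
      rw [← heq s hs i, add_sub_cancel_right]
      exact hasDerivWithinAt_pi.1 (hζ s hs) i
  intro s hs
  funext i
  exact linearODE_eqOn_Icc (hc i) (hcomp hζ₁ heq₁ i) (hcomp hζ₂ heq₂ i) (hc₁₂ i) hs

end DiagonalLinearODE

theorem bvp_unique_solvability_general (n k : ℕ)
    (a : Fin n → ℝ)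
    (T : ℝ) (hT : 0 < T)
    (η : ℝ → Fin n → ℝ) (hη : ContinuousOn η (Icc (-T) T)) :
    ∃ ζ ζd : ℝ → Fin n → ℝ,
      ((∀ s ∈ Icc (-T) T, HasDerivWithinAt ζ (ζd s) (Icc (-T) T) s) ∧
       ContinuousOn ζd (Icc (-T) T) ∧
       (∀ s ∈ Icc (-T) T, ∀ i : Fin n, ζd s i + a i * ζ s i = η s i) ∧
       (∀ i : Fin n, (i : ℕ) < n - k → ζ (-T) i = 0) ∧
       (∀ i : Fin n, n - k ≤ (i : ℕ) → ζ T i = 0)) ∧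
      (∀ ζ' ζ'd : ℝ → Fin n → ℝ,
        (∀ s ∈ Icc (-T) T, HasDerivWithinAt ζ' (ζ'd s) (Icc (-T) T) s) →
        ContinuousOn ζ'd (Icc (-T) T) →
        (∀ s ∈ Icc (-T) T, ∀ i : Fin n, ζ'd s i + a i * ζ' s i = η s i) →
        (∀ i : Fin n, (i : ℕ) < n - k → ζ' (-T) i = 0) →
        (∀ i : Fin n, n - k ≤ (i : ℕ) → ζ' T i = 0) →
        ∀ s ∈ Icc (-T) T, ζ' s = ζ s) := by
  set c : Fin n → ℝ := fun i => if (i : ℕ) < n - k then -T else T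
  have hleft (i : Fin n) (hi : (i : ℕ) < n - k) : c i = -T := if_pos hi
  have hright (i : Fin n) (hi : n - k ≤ (i : ℕ)) : c i = T := if_neg hi.not_gt
  have hc (i : Fin n) : c i ∈ Icc (-T) T := by
    have hTT : -T ≤ T := by linarith
    by_cases hi : (i : ℕ) < n - k
    · rw [hleft i hi]; exact left_mem_Icc.2 hTT
    · rw [hright i (not_lt.1 hi)]; exact right_mem_Icc.2 hTT
  obtain ⟨ζ, ζd, hζ, hζd, heq, hζc⟩ := exists_diagonal_linearODE_solution hc hη
  refine ⟨ζ, ζd, ⟨hζ, hζd, heq, fun i hi => hleft i hi ▸ hζc i, fun i hi => hright i hi ▸ hζc i⟩,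
    fun ζ' ζ'd hζ' _ heq' hleft' hright' => ?_⟩
  refine diagonal_linearODE_eqOn_Icc hc hζ' heq' hζ heq fun i => ?_
  rw [hζc i]
  by_cases hi : (i : ℕ) < n - k
  · rw [hleft i hi]; exact hleft' i hi
  · rw [hright i (not_lt.1 hi)]; exact hright' i (not_lt.1 hi)

/-- **Unique solvability of the boundary value problem for the linearized
gradient operator.** Let `A = diag(a₁,…,aₙ)` with
`a₁ ≥ … ≥ a_{n-k} > 0 > a_{n-k+1} ≥ … ≥ aₙ`.  For every `T > 0` and every
continuous `η : [-T,T] → ℝⁿ` there is a unique continuously differentiable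
`ζ : [-T,T] → ℝⁿ` with `ζ' + A ζ = η` on `[-T,T]`, `p₊ ζ(-T) = 0` and
`p₋ ζ(T) = 0`. -/
theorem bvp_unique_solvability (n k : ℕ) (hn : 1 ≤ n) (hkn : k ≤ n)
    (a : Fin n → ℝ)
    (ha_mono : ∀ i j : Fin n, i ≤ j → a j ≤ a i)
    (ha_pos : ∀ i : Fin n, (i : ℕ) < n - k → 0 < a i)
    (ha_neg : ∀ i : Fin n, n - k ≤ (i : ℕ) → a i < 0)
    (T : ℝ) (hT : 0 < T)
    (η : ℝ → Fin n → ℝ) (hη : ContinuousOn η (Icc (-T) T)) :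
    ∃ ζ ζd : ℝ → Fin n → ℝ,
      ((∀ s ∈ Icc (-T) T, HasDerivWithinAt ζ (ζd s) (Icc (-T) T) s) ∧
       ContinuousOn ζd (Icc (-T) T) ∧
       (∀ s ∈ Icc (-T) T, ∀ i : Fin n, ζd s i + a i * ζ s i = η s i) ∧
       (∀ i : Fin n, (i : ℕ) < n - k → ζ (-T) i = 0) ∧
       (∀ i : Fin n, n - k ≤ (i : ℕ) → ζ T i = 0)) ∧
      (∀ ζ' ζ'd : ℝ → Fin n → ℝ,
        (∀ s ∈ Icc (-T) T, HasDerivWithinAt ζ' (ζ'd s) (Icc (-T) T) s) →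
        ContinuousOn ζ'd (Icc (-T) T) →
        (∀ s ∈ Icc (-T) T, ∀ i : Fin n, ζ'd s i + a i * ζ' s i = η s i) →
        (∀ i : Fin n, (i : ℕ) < n - k → ζ' (-T) i = 0) →
        (∀ i : Fin n, n - k ≤ (i : ℕ) → ζ' T i = 0) →
        ∀ s ∈ Icc (-T) T, ζ' s = ζ s) :=
  bvp_unique_solvability_general n k a T hT η hη
end

section
/- Uniform bound for the right inverse: there exists a constant c > 0, depending only on the diagonal entries a₁,…,aₙ of A and independent of T, such that for every T > 0, every continuous η : [−T,T] → ℝⁿ, and every continuously differentiable ζ : [−T,T] → ℝⁿ satisfying ζ′(s) + A ζ(s) = η(s) for all s ∈ [−T,T], p₊ζ(−T) = 0, and p₋ζ(T) = 0, one has ‖ζ‖_{W^{1,2}([−T,T])} ≤ c · ‖η‖_{L²([−T,T])}. -/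
/-!
Each coordinate of `ζ' + Aζ = η` is a scalar equation `f' + b f = h` with `b ≠ 0`, and the
boundary condition sits at the end where `f` is damped, which makes `b (f(T)² - f(-T)²) ≥ 0`.
Multiplying the equation by `2 b f` and integrating then gives
`2 b² ∫ f² ≤ ∫ 2 b f h ≤ b² ∫ f² + ∫ h²`, so `∫ f² ≤ b⁻² ∫ h²`, and `f' = h - b f` gives
`∫ f'² ≤ 4 ∫ h²`. Summing over the coordinates yields the bound with `c² = 4 + ∑ 1 / aᵢ²`.
-/

open Set intervalIntegral

section Scalar

variable {f g h : ℝ → ℝ} {b t₀ t₁ : ℝ}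

theorem integral_two_mul_mul_eq_sq_sub_sq (ht : t₀ ≤ t₁)
    (hf : ∀ s ∈ Icc t₀ t₁, HasDerivWithinAt f (g s) (Icc t₀ t₁) s)
    (hg : ContinuousOn g (Icc t₀ t₁)) :
    ∫ s in t₀..t₁, 2 * f s * g s = f t₁ ^ 2 - f t₀ ^ 2 := by
  have hfc : ContinuousOn f (Icc t₀ t₁) := fun s hs => (hf s hs).continuousWithinAt
  refine integral_eq_sub_of_hasDerivAt_of_le ht (hfc.pow 2) (fun s hs => ?_)
    (((continuousOn_const.mul hfc).mul hg).intervalIntegrable_of_Icc ht)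
  have hfs := (hf s (Ioo_subset_Icc_self hs)).hasDerivAt (Icc_mem_nhds hs.1 hs.2)
  exact (hfs.pow 2).congr_deriv (by ring)

theorem sq_mul_integral_sq_le_integral_sq (ht : t₀ ≤ t₁)
    (hf : ∀ s ∈ Icc t₀ t₁, HasDerivWithinAt f (g s) (Icc t₀ t₁) s)
    (hg : ContinuousOn g (Icc t₀ t₁)) (hh : ContinuousOn h (Icc t₀ t₁))
    (hode : ∀ s ∈ Icc t₀ t₁, g s + b * f s = h s)
    (hbc : 0 ≤ b * (f t₁ ^ 2 - f t₀ ^ 2)) :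
    b ^ 2 * ∫ s in t₀..t₁, f s ^ 2 ≤ ∫ s in t₀..t₁, h s ^ 2 := by
  have hfc : ContinuousOn f (Icc t₀ t₁) := fun s hs => (hf s hs).continuousWithinAt
  have hf2 : IntervalIntegrable (fun s => f s ^ 2) MeasureTheory.volume t₀ t₁ :=
    (hfc.pow 2).intervalIntegrable_of_Icc ht
  have hh2 : IntervalIntegrable (fun s => h s ^ 2) MeasureTheory.volume t₀ t₁ :=
    (hh.pow 2).intervalIntegrable_of_Icc ht
  have hfg : IntervalIntegrable (fun s => 2 * f s * g s) MeasureTheory.volume t₀ t₁ :=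
    ((continuousOn_const.mul hfc).mul hg).intervalIntegrable_of_Icc ht
  have energy : ∫ s in t₀..t₁, 2 * b * f s * h s
      = b * (f t₁ ^ 2 - f t₀ ^ 2) + 2 * b ^ 2 * ∫ s in t₀..t₁, f s ^ 2 := by
    calc ∫ s in t₀..t₁, 2 * b * f s * h s
        = ∫ s in t₀..t₁, (b * (2 * f s * g s) + 2 * b ^ 2 * f s ^ 2) := by
          refine integral_congr fun s hs => ?_
          rw [uIcc_of_le ht] at hs
          simp only [← hode s hs]
          ring
      _ = b * (∫ s in t₀..t₁, 2 * f s * g s) + 2 * b ^ 2 * ∫ s in t₀..t₁, f s ^ 2 := by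
          rw [integral_add (hfg.const_mul b) (hf2.const_mul _), integral_const_mul,
            integral_const_mul]
      _ = _ := by rw [integral_two_mul_mul_eq_sq_sub_sq ht hf hg]
  have amgm : ∫ s in t₀..t₁, 2 * b * f s * h s
      ≤ ∫ s in t₀..t₁, (b ^ 2 * f s ^ 2 + h s ^ 2) :=
    integral_mono_on ht (((continuousOn_const.mul hfc).mul hh).intervalIntegrable_of_Icc ht)
      ((hf2.const_mul _).add hh2) fun s _ => by nlinarith [sq_nonneg (b * f s - h s)]
  rw [integral_add (hf2.const_mul _) hh2, integral_const_mul] at amgm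
  linarith

theorem integral_sq_add_integral_deriv_sq_le (ht : t₀ ≤ t₁)
    (hf : ∀ s ∈ Icc t₀ t₁, HasDerivWithinAt f (g s) (Icc t₀ t₁) s)
    (hg : ContinuousOn g (Icc t₀ t₁)) (hh : ContinuousOn h (Icc t₀ t₁))
    (hode : ∀ s ∈ Icc t₀ t₁, g s + b * f s = h s)
    (hbc : (0 < b ∧ f t₀ = 0) ∨ (b < 0 ∧ f t₁ = 0)) :
    (∫ s in t₀..t₁, f s ^ 2) + ∫ s in t₀..t₁, g s ^ 2
      ≤ (1 / b ^ 2 + 4) * ∫ s in t₀..t₁, h s ^ 2 := by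
  have hfc : ContinuousOn f (Icc t₀ t₁) := fun s hs => (hf s hs).continuousWithinAt
  have hb : 0 < b ^ 2 := by
    rcases hbc with ⟨hb, -⟩ | ⟨hb, -⟩
    exacts [pow_pos hb 2, by nlinarith]
  have hsign : 0 ≤ b * (f t₁ ^ 2 - f t₀ ^ 2) := by
    rcases hbc with ⟨hb, h₀⟩ | ⟨hb, h₁⟩
    · rw [h₀]; nlinarith [sq_nonneg (f t₁)]
    · rw [h₁]; nlinarith [sq_nonneg (f t₀)]
  have hF := sq_mul_integral_sq_le_integral_sq ht hf hg hh hode hsign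
  have hh2 : IntervalIntegrable (fun s => 2 * h s ^ 2) MeasureTheory.volume t₀ t₁ :=
    ((hh.pow 2).intervalIntegrable_of_Icc ht).const_mul 2
  have hf2 : IntervalIntegrable (fun s => 2 * b ^ 2 * f s ^ 2) MeasureTheory.volume t₀ t₁ :=
    ((hfc.pow 2).intervalIntegrable_of_Icc ht).const_mul _
  have hG : ∫ s in t₀..t₁, g s ^ 2 ≤ ∫ s in t₀..t₁, (2 * h s ^ 2 + 2 * b ^ 2 * f s ^ 2) :=
    integral_mono_on ht ((hg.pow 2).intervalIntegrable_of_Icc ht) (hh2.add hf2) fun s hs => by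
      rw [eq_sub_of_add_eq (hode s hs)]
      nlinarith [sq_nonneg (h s + b * f s)]
  rw [integral_add hh2 hf2, integral_const_mul, integral_const_mul] at hG
  have hF' : ∫ s in t₀..t₁, f s ^ 2 ≤ 1 / b ^ 2 * ∫ s in t₀..t₁, h s ^ 2 := by
    rw [one_div_mul_eq_div, le_div_iff₀ hb]
    linarith
  linarith

end Scalar

section Euclidean

variable {ι : Type*} [Fintype ι] {t₀ t₁ : ℝ}

theorem integral_norm_sq_eq_sum_integral_sq {v : ℝ → EuclideanSpace ℝ ι} (ht : t₀ ≤ t₁)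
    (hv : ContinuousOn v (Icc t₀ t₁)) :
    ∫ s in t₀..t₁, ‖v s‖ ^ 2 = ∑ i, ∫ s in t₀..t₁, v s i ^ 2 := by
  simp_rw [EuclideanSpace.real_norm_sq_eq]
  refine integral_finsetSum fun i _ => ?_
  have hvi := (EuclideanSpace.proj i).continuous.comp_continuousOn hv
  exact (hvi.pow 2).intervalIntegrable_of_Icc ht

theorem integral_norm_sq_add_norm_sq_le_of_forall_apply {u v w : ℝ → EuclideanSpace ℝ ι} {C : ℝ}
    (ht : t₀ ≤ t₁) (hu : ContinuousOn u (Icc t₀ t₁)) (hv : ContinuousOn v (Icc t₀ t₁))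
    (hw : ContinuousOn w (Icc t₀ t₁))
    (h : ∀ i, (∫ s in t₀..t₁, u s i ^ 2) + ∫ s in t₀..t₁, v s i ^ 2
      ≤ C * ∫ s in t₀..t₁, w s i ^ 2) :
    ∫ s in t₀..t₁, (‖u s‖ ^ 2 + ‖v s‖ ^ 2) ≤ C * ∫ s in t₀..t₁, ‖w s‖ ^ 2 := by
  have hsq {x : ℝ → EuclideanSpace ℝ ι} (hx : ContinuousOn x (Icc t₀ t₁)) :
      IntervalIntegrable (fun s => ‖x s‖ ^ 2) MeasureTheory.volume t₀ t₁ :=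
    (hx.norm.pow 2).intervalIntegrable_of_Icc ht
  rw [integral_add (hsq hu) (hsq hv), integral_norm_sq_eq_sum_integral_sq ht hu,
    integral_norm_sq_eq_sum_integral_sq ht hv,
    integral_norm_sq_eq_sum_integral_sq ht hw, ← Finset.sum_add_distrib, Finset.mul_sum]
  exact Finset.sum_le_sum fun i _ => h i

end Euclidean

theorem right_inverse_uniform_bound_general (n k : ℕ)
    (a : Fin n → ℝ)
    (ha_pos : ∀ i : Fin n, (i : ℕ) < n - k → 0 < a i)
    (ha_neg : ∀ i : Fin n, n - k ≤ (i : ℕ) → a i < 0) :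
    ∃ c : ℝ, 0 < c ∧
      ∀ T : ℝ, 0 < T →
      ∀ η : ℝ → EuclideanSpace ℝ (Fin n), ContinuousOn η (Icc (-T) T) →
      ∀ ζ ζd : ℝ → EuclideanSpace ℝ (Fin n),
        (∀ s ∈ Icc (-T) T, HasDerivWithinAt ζ (ζd s) (Icc (-T) T) s) →
        ContinuousOn ζd (Icc (-T) T) →
        (∀ s ∈ Icc (-T) T, ∀ i : Fin n, ζd s i + a i * ζ s i = η s i) →
        (∀ i : Fin n, (i : ℕ) < n - k → ζ (-T) i = 0) →
        (∀ i : Fin n, n - k ≤ (i : ℕ) → ζ T i = 0) →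
        Real.sqrt (∫ s in (-T)..T, (‖ζ s‖ ^ 2 + ‖ζd s‖ ^ 2)) ≤
          c * Real.sqrt (∫ s in (-T)..T, ‖η s‖ ^ 2) := by
  set C := 4 + ∑ i, 1 / a i ^ 2
  have hC : 0 < C := by positivity
  refine ⟨√C, Real.sqrt_pos.2 hC, fun T hT η hη ζ ζd hζ hζd hode hζ_pos hζ_neg => ?_⟩
  have hT' : -T ≤ T := by linarith
  have hζc : ContinuousOn ζ (Icc (-T) T) := fun s hs => (hζ s hs).continuousWithinAt
  have hcomp (i : Fin n) : (∫ s in (-T)..T, ζ s i ^ 2) + ∫ s in (-T)..T, ζd s i ^ 2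
      ≤ C * ∫ s in (-T)..T, η s i ^ 2 := by
    have hbc : (0 < a i ∧ ζ (-T) i = 0) ∨ (a i < 0 ∧ ζ T i = 0) := by
      rcases lt_or_ge (i : ℕ) (n - k) with hi | hi
      exacts [.inl ⟨ha_pos i hi, hζ_pos i hi⟩, .inr ⟨ha_neg i hi, hζ_neg i hi⟩]
    have hCi : 1 / a i ^ 2 + 4 ≤ C := by
      linarith [Finset.single_le_sum (f := fun j => 1 / a j ^ 2) (fun j _ => by positivity)
        (Finset.mem_univ i)]
    refine (integral_sq_add_integral_deriv_sq_le hT'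
      (fun s hs => (EuclideanSpace.proj i).hasFDerivAt.comp_hasDerivWithinAt s (hζ s hs))
      ((EuclideanSpace.proj i).continuous.comp_continuousOn hζd)
      ((EuclideanSpace.proj i).continuous.comp_continuousOn hη)
      (fun s hs => hode s hs i) hbc).trans ?_
    exact mul_le_mul_of_nonneg_right hCi (integral_nonneg hT' fun s _ => sq_nonneg _)
  calc √(∫ s in (-T)..T, (‖ζ s‖ ^ 2 + ‖ζd s‖ ^ 2))
      ≤ √(C * ∫ s in (-T)..T, ‖η s‖ ^ 2) :=
        Real.sqrt_le_sqrt (integral_norm_sq_add_norm_sq_le_of_forall_apply hT' hζc hζd hη hcomp)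
    _ = √C * √(∫ s in (-T)..T, ‖η s‖ ^ 2) := Real.sqrt_mul hC.le _

/-- **Uniform bound for the right inverse.** Let `A = diag(a₁,…,aₙ)` with
`a₁ ≥ … ≥ a_{n-k} > 0 > a_{n-k+1} ≥ … ≥ aₙ`.  There is a constant `c > 0`
depending only on the diagonal entries (and not on `T`) such that for every
`T > 0`, every continuous `η : [-T,T] → ℝⁿ` and every continuously
differentiable `ζ : [-T,T] → ℝⁿ` with `ζ' + A ζ = η`, `p₊ ζ(-T) = 0` and
`p₋ ζ(T) = 0`, one has `‖ζ‖_{W^{1,2}([-T,T])} ≤ c ‖η‖_{L²([-T,T])}`. -/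
theorem right_inverse_uniform_bound (n k : ℕ) (hn : 1 ≤ n) (hkn : k ≤ n)
    (a : Fin n → ℝ)
    (ha_mono : ∀ i j : Fin n, i ≤ j → a j ≤ a i)
    (ha_pos : ∀ i : Fin n, (i : ℕ) < n - k → 0 < a i)
    (ha_neg : ∀ i : Fin n, n - k ≤ (i : ℕ) → a i < 0) :
    ∃ c : ℝ, 0 < c ∧
      ∀ T : ℝ, 0 < T →
      ∀ η : ℝ → EuclideanSpace ℝ (Fin n), ContinuousOn η (Icc (-T) T) →
      ∀ ζ ζd : ℝ → EuclideanSpace ℝ (Fin n),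
        (∀ s ∈ Icc (-T) T, HasDerivWithinAt ζ (ζd s) (Icc (-T) T) s) →
        ContinuousOn ζd (Icc (-T) T) →
        (∀ s ∈ Icc (-T) T, ∀ i : Fin n, ζd s i + a i * ζ s i = η s i) →
        (∀ i : Fin n, (i : ℕ) < n - k → ζ (-T) i = 0) →
        (∀ i : Fin n, n - k ≤ (i : ℕ) → ζ T i = 0) →
        Real.sqrt (∫ s in (-T)..T, (‖ζ s‖ ^ 2 + ‖ζd s‖ ^ 2)) ≤
          c * Real.sqrt (∫ s in (-T)..T, ‖η s‖ ^ 2) :=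
  right_inverse_uniform_bound_general n k a ha_pos ha_neg
end

section
/- The pre-glued path is an approximate zero of the gradient flow equation: let f : ℝⁿ → ℝ be smooth with ∇f(0) = 0, and let ε, c, μ > 0 be constants with |∇f(z)| ≤ μ|z| whenever |z| ≤ c. Let w₊ : [0,∞) → ℝⁿ and w₋ : (−∞,0] → ℝⁿ be continuously differentiable solutions of w′(s) + ∇f(w(s)) = 0 satisfying |w₊(s)| + |w₊′(s)| ≤ c·e^{−εs} for all s ≥ 0 and |w₋(s)| + |w₋′(s)| ≤ c·e^{εs} for all s ≤ 0. Then for every T ≥ 3 the pre-glued path w_T satisfies ∫_{−T}^{T} |w_T′(s) + ∇f(w_T(s))|² ds ≤ 2(‖β′‖_∞ + 1 + μ)² c² · (e^{6ε} − e^{2ε})/ε · e^{−2εT}. -/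
open Set

set_option maxHeartbeats 1000000

/-- **The pre-glued path is an approximate zero of the gradient flow equation.**
Fix a smooth cutoff `β : ℝ → [0,1]` with `β = 0` on `(-∞,-1]` and `β = 1` on
`[1,∞)`.  Let `f : ℝⁿ → ℝ` be smooth with `∇f(0) = 0`, let `ε, c, μ > 0` with
`|∇f(z)| ≤ μ |z|` whenever `|z| ≤ c`, and let `w₊`, `w₋` be gradient flow
half-trajectories with `|w₊(s)| + |w₊'(s)| ≤ c e^{-εs}` for `s ≥ 0` and
`|w₋(s)| + |w₋'(s)| ≤ c e^{εs}` for `s ≤ 0`.  Then for every `T ≥ 3` the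
pre-glued path `w_T(s) = (1-β(s+2)) w₊(T+s) + β(s-2) w₋(-T+s)` satisfies
`∫_{-T}^{T} |w_T' + ∇f(w_T)|² ds ≤ 2 (‖β'‖_∞ + 1 + μ)² c² (e^{6ε}-e^{2ε})/ε · e^{-2εT}`. -/
theorem pre_glued_path_approximate_zero (n : ℕ)
    (β : ℝ → ℝ) (hβsmooth : ContDiff ℝ (⊤ : ℕ∞) β) (hβ01 : ∀ s, β s ∈ Icc (0:ℝ) 1)
    (hβ0 : ∀ s ≤ (-1:ℝ), β s = 0) (hβ1 : ∀ s ≥ (1:ℝ), β s = 1)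
    (f : EuclideanSpace ℝ (Fin n) → ℝ) (hf : ContDiff ℝ (⊤ : ℕ∞) f)
    (hcrit : gradient f 0 = 0)
    (ε c μ : ℝ) (hε : 0 < ε) (hc : 0 < c) (hμ : 0 < μ)
    (hgrad : ∀ z : EuclideanSpace ℝ (Fin n), ‖z‖ ≤ c → ‖gradient f z‖ ≤ μ * ‖z‖)
    (wp wpd wm wmd : ℝ → EuclideanSpace ℝ (Fin n))
    (hwp : ∀ s ∈ Ici (0:ℝ), HasDerivWithinAt wp (wpd s) (Ici (0:ℝ)) s)
    (hwpode : ∀ s ∈ Ici (0:ℝ), wpd s + gradient f (wp s) = 0)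
    (hwm : ∀ s ∈ Iic (0:ℝ), HasDerivWithinAt wm (wmd s) (Iic (0:ℝ)) s)
    (hwmode : ∀ s ∈ Iic (0:ℝ), wmd s + gradient f (wm s) = 0)
    (hwpdecay : ∀ s ∈ Ici (0:ℝ), ‖wp s‖ + ‖wpd s‖ ≤ c * Real.exp (-(ε * s)))
    (hwmdecay : ∀ s ∈ Iic (0:ℝ), ‖wm s‖ + ‖wmd s‖ ≤ c * Real.exp (ε * s))
    (T : ℝ) (hT : 3 ≤ T)
    (wT wTd : ℝ → EuclideanSpace ℝ (Fin n))
    (hwT : ∀ s, wT s = (1 - β (s + 2)) • wp (T + s) + β (s - 2) • wm (-T + s))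
    (hwTd : ∀ s, wTd s =
      (-(deriv β (s + 2))) • wp (T + s) + (1 - β (s + 2)) • wpd (T + s)
        + (deriv β (s - 2)) • wm (-T + s) + β (s - 2) • wmd (-T + s)) :
    (∫ s in (-T)..T, ‖wTd s + gradient f (wT s)‖ ^ 2) ≤
      2 * ((⨆ s : ℝ, |deriv β s|) + 1 + μ) ^ 2 * c ^ 2 *
        ((Real.exp (6 * ε) - Real.exp (2 * ε)) / ε) * Real.exp (-(2 * ε * T)) := by
  have hβd : Differentiable ℝ β := hβsmooth.differentiable (by simp)
  have hβdc : Continuous (deriv β) := hβsmooth.continuous_deriv (by simp)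
  -- the derivative of the cutoff vanishes outside (-1,1)
  have hd0 : ∀ s : ℝ, s ≤ -1 → deriv β s = 0 := by
    intro s hs
    have h1 : HasDerivWithinAt β 0 (Iic (-1:ℝ)) s :=
      (hasDerivWithinAt_const s _ (0:ℝ)).congr (fun x hx => hβ0 x hx) (hβ0 s hs)
    have h2 : HasDerivWithinAt β (deriv β s) (Iic (-1:ℝ)) s :=
      (hβd s).hasDerivAt.hasDerivWithinAt
    have hu := uniqueDiffOn_Iic (-1:ℝ) s hs
    rw [← h2.derivWithin hu, h1.derivWithin hu]
  have hd1 : ∀ s : ℝ, (1:ℝ) ≤ s → deriv β s = 0 := by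
    intro s hs
    have h1 : HasDerivWithinAt β 0 (Ici (1:ℝ)) s :=
      (hasDerivWithinAt_const s _ (1:ℝ)).congr (fun x hx => hβ1 x hx) (hβ1 s hs)
    have h2 : HasDerivWithinAt β (deriv β s) (Ici (1:ℝ)) s :=
      (hβd s).hasDerivAt.hasDerivWithinAt
    have hu := uniqueDiffOn_Ici (1:ℝ) s hs
    rw [← h2.derivWithin hu, h1.derivWithin hu]
  -- the sup of |β'| bounds |β'| everywhere
  set B : ℝ := ⨆ s : ℝ, |deriv β s| with hBdef
  obtain ⟨M, hM⟩ := (isCompact_Icc (a := (-1:ℝ)) (b := 1)).exists_bound_of_continuousOn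
      hβdc.continuousOn
  have hbdd : BddAbove (Set.range fun s : ℝ => |deriv β s|) := by
    refine ⟨max M 0, ?_⟩
    rintro _ ⟨s, rfl⟩
    by_cases hs : s ∈ Icc (-1:ℝ) 1
    · exact le_max_of_le_left (by simpa [Real.norm_eq_abs] using hM s hs)
    · have hz : deriv β s = 0 := by
        rcases le_or_gt s (-1) with h | h
        · exact hd0 s h
        · refine hd1 s ?_
          by_contra hcon
          exact hs ⟨h.le, le_of_not_ge hcon⟩
      simp [hz]
  have hBle : ∀ s, |deriv β s| ≤ B := fun s => le_ciSup hbdd s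
  have hB0 : 0 ≤ B := le_trans (abs_nonneg _) (hBle 0)
  -- continuity facts
  have hG : Continuous (gradient f) := by
    have h1 : Continuous (fderiv ℝ f) := hf.continuous_fderiv (by simp)
    exact (LinearIsometryEquiv.continuous _).comp h1
  have hwpc : ContinuousOn wp (Ici (0:ℝ)) := fun s hs => (hwp s hs).continuousWithinAt
  have hwmc : ContinuousOn wm (Iic (0:ℝ)) := fun s hs => (hwm s hs).continuousWithinAt
  have hwpdc : ContinuousOn wpd (Ici (0:ℝ)) := by
    refine ((hG.comp_continuousOn hwpc).neg).congr ?_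
    intro s hs
    exact eq_neg_of_add_eq_zero_left (hwpode s hs)
  have hwmdc : ContinuousOn wmd (Iic (0:ℝ)) := by
    refine ((hG.comp_continuousOn hwmc).neg).congr ?_
    intro s hs
    exact eq_neg_of_add_eq_zero_left (hwmode s hs)
  -- the explicit integrand
  set F : ℝ → EuclideanSpace ℝ (Fin n) := fun s =>
    ((-(deriv β (s + 2))) • wp (T + s) + (1 - β (s + 2)) • wpd (T + s)
        + (deriv β (s - 2)) • wm (-T + s) + β (s - 2) • wmd (-T + s))
      + gradient f ((1 - β (s + 2)) • wp (T + s) + β (s - 2) • wm (-T + s)) with hFdef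
  have hge : ∀ s, wTd s + gradient f (wT s) = F s := by
    intro s; rw [hwT, hwTd]
  simp only [hge]
  -- continuity of the integrand on [-T,T]
  have hFc : ContinuousOn F (Icc (-T) T) := by
    have haux : Continuous (fun s : ℝ => T + s) := continuous_const.add continuous_id
    have haux' : Continuous (fun s : ℝ => -T + s) := continuous_const.add continuous_id
    have hmp : MapsTo (fun s : ℝ => T + s) (Icc (-T) T) (Ici (0:ℝ)) := by
      intro s hs; simp only [mem_Ici]; linarith [hs.1]
    have hmm : MapsTo (fun s : ℝ => -T + s) (Icc (-T) T) (Iic (0:ℝ)) := by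
      intro s hs; simp only [mem_Iic]; linarith [hs.2]
    have c1 : ContinuousOn (fun s => wp (T + s)) (Icc (-T) T) :=
      hwpc.comp haux.continuousOn hmp
    have c2 : ContinuousOn (fun s => wpd (T + s)) (Icc (-T) T) :=
      hwpdc.comp haux.continuousOn hmp
    have c3 : ContinuousOn (fun s => wm (-T + s)) (Icc (-T) T) :=
      hwmc.comp haux'.continuousOn hmm
    have c4 : ContinuousOn (fun s => wmd (-T + s)) (Icc (-T) T) :=
      hwmdc.comp haux'.continuousOn hmm
    have cb1 : Continuous (fun s : ℝ => deriv β (s + 2)) :=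
      hβdc.comp (continuous_id.add continuous_const)
    have cb2 : Continuous (fun s : ℝ => deriv β (s - 2)) :=
      hβdc.comp (continuous_id.sub continuous_const)
    have cb3 : Continuous (fun s : ℝ => 1 - β (s + 2)) :=
      continuous_const.sub (hβsmooth.continuous.comp (continuous_id.add continuous_const))
    have cb4 : Continuous (fun s : ℝ => β (s - 2)) :=
      hβsmooth.continuous.comp (continuous_id.sub continuous_const)
    have cwT : ContinuousOn
        (fun s => (1 - β (s + 2)) • wp (T + s) + β (s - 2) • wm (-T + s)) (Icc (-T) T) :=
      (cb3.continuousOn.smul c1).add (cb4.continuousOn.smul c3)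
    exact ((((cb1.neg.continuousOn.smul c1).add (cb3.continuousOn.smul c2)).add
        (cb2.continuousOn.smul c3)).add (cb4.continuousOn.smul c4)).add
      (hG.comp_continuousOn cwT)
  have hgi : ∀ a b : ℝ, -T ≤ a → b ≤ T → a ≤ b →
      IntervalIntegrable (fun s => ‖F s‖ ^ 2) MeasureTheory.volume a b := by
    intro a b ha hb hab
    apply ContinuousOn.intervalIntegrable
    apply (hFc.norm.pow 2).mono
    rw [uIcc_of_le hab]
    exact Icc_subset_Icc ha hb
  -- split the integral
  have hT3 : (-T:ℝ) ≤ -3 := by linarith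
  have e1 := intervalIntegral.integral_add_adjacent_intervals
    (hgi (-T) (-3) le_rfl (by linarith) hT3)
    (hgi (-3) (-1) (by linarith) (by linarith) (by norm_num))
  have e2 := intervalIntegral.integral_add_adjacent_intervals
    (hgi (-T) (-1) le_rfl (by linarith) (by linarith))
    (hgi (-1) 1 (by linarith) (by linarith) (by norm_num))
  have e3 := intervalIntegral.integral_add_adjacent_intervals
    (hgi (-T) 1 le_rfl (by linarith) (by linarith))
    (hgi 1 3 (by linarith) (by linarith) (by norm_num))
  have e4 := intervalIntegral.integral_add_adjacent_intervals
    (hgi (-T) 3 le_rfl (by linarith) (by linarith))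
    (hgi 3 T (by linarith) le_rfl (by linarith))
  -- zero pieces
  have z1 : (∫ s in (-T)..(-3:ℝ), ‖F s‖ ^ 2) = 0 := by
    rw [intervalIntegral.integral_congr (g := fun _ => (0:ℝ))]
    · simp
    · intro s hs
      rw [uIcc_of_le hT3] at hs
      obtain ⟨hs1, hs2⟩ := hs
      have hb1 : β (s + 2) = 0 := hβ0 _ (by linarith)
      have hb2 : β (s - 2) = 0 := hβ0 _ (by linarith)
      have hdd1 : deriv β (s + 2) = 0 := hd0 _ (by linarith)
      have hdd2 : deriv β (s - 2) = 0 := hd0 _ (by linarith)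
      have hts : T + s ∈ Ici (0:ℝ) := by simp only [mem_Ici]; linarith
      simp only [hFdef, hb1, hb2, hdd1, hdd2, neg_zero, zero_smul, sub_zero, one_smul,
        add_zero, zero_add]
      rw [hwpode (T + s) hts]
      simp
  have z3 : (∫ s in (-1:ℝ)..(1:ℝ), ‖F s‖ ^ 2) = 0 := by
    rw [intervalIntegral.integral_congr (g := fun _ => (0:ℝ))]
    · simp
    · intro s hs
      rw [uIcc_of_le (by norm_num : (-1:ℝ) ≤ 1)] at hs
      obtain ⟨hs1, hs2⟩ := hs
      have hb1 : β (s + 2) = 1 := hβ1 _ (by linarith)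
      have hb2 : β (s - 2) = 0 := hβ0 _ (by linarith)
      have hdd1 : deriv β (s + 2) = 0 := hd1 _ (by linarith)
      have hdd2 : deriv β (s - 2) = 0 := hd0 _ (by linarith)
      simp only [hFdef, hb1, hb2, hdd1, hdd2, neg_zero, zero_smul, sub_self,
        add_zero, zero_add, hcrit]
      simp
  have z5 : (∫ s in (3:ℝ)..T, ‖F s‖ ^ 2) = 0 := by
    rw [intervalIntegral.integral_congr (g := fun _ => (0:ℝ))]
    · simp
    · intro s hs
      rw [uIcc_of_le (by linarith : (3:ℝ) ≤ T)] at hs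
      obtain ⟨hs1, hs2⟩ := hs
      have hb1 : β (s + 2) = 1 := hβ1 _ (by linarith)
      have hb2 : β (s - 2) = 1 := hβ1 _ (by linarith)
      have hdd1 : deriv β (s + 2) = 0 := hd1 _ (by linarith)
      have hdd2 : deriv β (s - 2) = 0 := hd1 _ (by linarith)
      have hts : -T + s ∈ Iic (0:ℝ) := by simp only [mem_Iic]; linarith
      simp only [hFdef, hb1, hb2, hdd1, hdd2, neg_zero, zero_smul, sub_self, one_smul,
        add_zero, zero_add]
      rw [hwmode (-T + s) hts]
      simp
  -- pointwise bounds on the two middle pieces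
  have keyp : ∀ s ∈ Icc (-3:ℝ) (-1:ℝ),
      ‖F s‖ ^ 2 ≤ (B + 1 + μ) ^ 2 * c ^ 2 * Real.exp (-(2 * ε * (T + s))) := by
    intro s hs
    have hts : T + s ∈ Ici (0:ℝ) := by simp only [mem_Ici]; linarith [hs.1]
    have hb2 : β (s - 2) = 0 := hβ0 _ (by linarith [hs.2])
    have hdd2 : deriv β (s - 2) = 0 := hd0 _ (by linarith [hs.2])
    have hdecay := hwpdecay (T + s) hts
    have hnp : (0:ℝ) ≤ ‖wp (T + s)‖ := norm_nonneg _
    have hnpd : (0:ℝ) ≤ ‖wpd (T + s)‖ := norm_nonneg _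
    have hexple : Real.exp (-(ε * (T + s))) ≤ 1 := by
      rw [Real.exp_le_one_iff]
      have : 0 ≤ ε * (T + s) := mul_nonneg hε.le (by simpa using hts)
      linarith
    have hwple : ‖wp (T + s)‖ ≤ c := by nlinarith
    obtain ⟨hb0', hb1'⟩ := hβ01 (s + 2)
    have hwTnorm : ‖(1 - β (s + 2)) • wp (T + s) + β (s - 2) • wm (-T + s)‖ ≤ ‖wp (T + s)‖ := by
      rw [hb2, zero_smul, add_zero, norm_smul, Real.norm_eq_abs, abs_of_nonneg (by linarith)]
      nlinarith
    have hgradle : ‖gradient f ((1 - β (s + 2)) • wp (T + s) + β (s - 2) • wm (-T + s))‖ ≤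
        μ * ‖wp (T + s)‖ :=
      le_trans (hgrad _ (hwTnorm.trans hwple)) (mul_le_mul_of_nonneg_left hwTnorm hμ.le)
    have hFnorm : ‖F s‖ ≤ (B + 1 + μ) * (c * Real.exp (-(ε * (T + s)))) := by
      have hF1 : F s = ((-(deriv β (s + 2))) • wp (T + s) + (1 - β (s + 2)) • wpd (T + s))
          + gradient f ((1 - β (s + 2)) • wp (T + s) + β (s - 2) • wm (-T + s)) := by
        simp only [hFdef, hb2, hdd2, zero_smul, add_zero]
      rw [hF1]
      have t1 : ‖(-(deriv β (s + 2))) • wp (T + s)‖ ≤ B * ‖wp (T + s)‖ := by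
        rw [norm_smul, Real.norm_eq_abs, abs_neg]
        exact mul_le_mul_of_nonneg_right (hBle _) hnp
      have t2 : ‖(1 - β (s + 2)) • wpd (T + s)‖ ≤ ‖wpd (T + s)‖ := by
        rw [norm_smul, Real.norm_eq_abs, abs_of_nonneg (by linarith)]
        nlinarith
      calc ‖((-(deriv β (s + 2))) • wp (T + s) + (1 - β (s + 2)) • wpd (T + s))
          + gradient f ((1 - β (s + 2)) • wp (T + s) + β (s - 2) • wm (-T + s))‖
          ≤ ‖(-(deriv β (s + 2))) • wp (T + s) + (1 - β (s + 2)) • wpd (T + s)‖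
            + ‖gradient f ((1 - β (s + 2)) • wp (T + s) + β (s - 2) • wm (-T + s))‖ :=
            norm_add_le _ _
        _ ≤ (‖(-(deriv β (s + 2))) • wp (T + s)‖ + ‖(1 - β (s + 2)) • wpd (T + s)‖)
            + μ * ‖wp (T + s)‖ := add_le_add (norm_add_le _ _) hgradle
        _ ≤ B * ‖wp (T + s)‖ + ‖wpd (T + s)‖ + μ * ‖wp (T + s)‖ := by
            have := add_le_add (add_le_add t1 t2) (le_refl (μ * ‖wp (T + s)‖))
            linarith
        _ ≤ (B + 1 + μ) * (‖wp (T + s)‖ + ‖wpd (T + s)‖) := by nlinarith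
        _ ≤ (B + 1 + μ) * (c * Real.exp (-(ε * (T + s)))) :=
            mul_le_mul_of_nonneg_left hdecay (by linarith)
    calc ‖F s‖ ^ 2 ≤ ((B + 1 + μ) * (c * Real.exp (-(ε * (T + s))))) ^ 2 :=
        pow_le_pow_left₀ (norm_nonneg _) hFnorm 2
      _ = (B + 1 + μ) ^ 2 * c ^ 2 * Real.exp (-(2 * ε * (T + s))) := by
          rw [mul_pow, mul_pow, sq (Real.exp _), ← Real.exp_add]
          ring_nf
  have keym : ∀ s ∈ Icc (1:ℝ) (3:ℝ),
      ‖F s‖ ^ 2 ≤ (B + 1 + μ) ^ 2 * c ^ 2 * Real.exp (-(2 * ε * (T - s))) := by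
    intro s hs
    have hts : -T + s ∈ Iic (0:ℝ) := by simp only [mem_Iic]; linarith [hs.2]
    have hb1 : β (s + 2) = 1 := hβ1 _ (by linarith [hs.1])
    have hdd1 : deriv β (s + 2) = 0 := hd1 _ (by linarith [hs.1])
    have hdecay := hwmdecay (-T + s) hts
    have hexpeq : Real.exp (ε * (-T + s)) = Real.exp (-(ε * (T - s))) := by ring_nf
    rw [hexpeq] at hdecay
    have hnp : (0:ℝ) ≤ ‖wm (-T + s)‖ := norm_nonneg _
    have hnpd : (0:ℝ) ≤ ‖wmd (-T + s)‖ := norm_nonneg _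
    have hexple : Real.exp (-(ε * (T - s))) ≤ 1 := by
      rw [Real.exp_le_one_iff]
      have : 0 ≤ ε * (T - s) := mul_nonneg hε.le (by linarith [hs.2])
      linarith
    have hwmle : ‖wm (-T + s)‖ ≤ c := by nlinarith
    obtain ⟨hb0', hb1'⟩ := hβ01 (s - 2)
    have hwTnorm : ‖(1 - β (s + 2)) • wp (T + s) + β (s - 2) • wm (-T + s)‖ ≤ ‖wm (-T + s)‖ := by
      rw [hb1, sub_self, zero_smul, zero_add, norm_smul, Real.norm_eq_abs,
        abs_of_nonneg hb0']
      nlinarith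
    have hgradle : ‖gradient f ((1 - β (s + 2)) • wp (T + s) + β (s - 2) • wm (-T + s))‖ ≤
        μ * ‖wm (-T + s)‖ :=
      le_trans (hgrad _ (hwTnorm.trans hwmle)) (mul_le_mul_of_nonneg_left hwTnorm hμ.le)
    have hFnorm : ‖F s‖ ≤ (B + 1 + μ) * (c * Real.exp (-(ε * (T - s)))) := by
      have hF1 : F s = ((deriv β (s - 2)) • wm (-T + s) + β (s - 2) • wmd (-T + s))
          + gradient f ((1 - β (s + 2)) • wp (T + s) + β (s - 2) • wm (-T + s)) := by
        simp only [hFdef, hb1, hdd1, neg_zero, zero_smul, sub_self, add_zero, zero_add]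
      rw [hF1]
      have t1 : ‖(deriv β (s - 2)) • wm (-T + s)‖ ≤ B * ‖wm (-T + s)‖ := by
        rw [norm_smul, Real.norm_eq_abs]
        exact mul_le_mul_of_nonneg_right (hBle _) hnp
      have t2 : ‖β (s - 2) • wmd (-T + s)‖ ≤ ‖wmd (-T + s)‖ := by
        rw [norm_smul, Real.norm_eq_abs, abs_of_nonneg hb0']
        nlinarith
      calc ‖((deriv β (s - 2)) • wm (-T + s) + β (s - 2) • wmd (-T + s))
          + gradient f ((1 - β (s + 2)) • wp (T + s) + β (s - 2) • wm (-T + s))‖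
          ≤ ‖(deriv β (s - 2)) • wm (-T + s) + β (s - 2) • wmd (-T + s)‖
            + ‖gradient f ((1 - β (s + 2)) • wp (T + s) + β (s - 2) • wm (-T + s))‖ :=
            norm_add_le _ _
        _ ≤ (‖(deriv β (s - 2)) • wm (-T + s)‖ + ‖β (s - 2) • wmd (-T + s)‖)
            + μ * ‖wm (-T + s)‖ := add_le_add (norm_add_le _ _) hgradle
        _ ≤ B * ‖wm (-T + s)‖ + ‖wmd (-T + s)‖ + μ * ‖wm (-T + s)‖ := by linarith
        _ ≤ (B + 1 + μ) * (‖wm (-T + s)‖ + ‖wmd (-T + s)‖) := by nlinarith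
        _ ≤ (B + 1 + μ) * (c * Real.exp (-(ε * (T - s)))) :=
            mul_le_mul_of_nonneg_left hdecay (by linarith)
    calc ‖F s‖ ^ 2 ≤ ((B + 1 + μ) * (c * Real.exp (-(ε * (T - s))))) ^ 2 :=
        pow_le_pow_left₀ (norm_nonneg _) hFnorm 2
      _ = (B + 1 + μ) ^ 2 * c ^ 2 * Real.exp (-(2 * ε * (T - s))) := by
          rw [mul_pow, mul_pow, sq (Real.exp _), ← Real.exp_add]
          ring_nf
  -- the elementary exponential integral
  have hexpint : ∀ k a b : ℝ, k ≠ 0 →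
      (∫ s in a..b, Real.exp (k * s)) = (Real.exp (k * b) - Real.exp (k * a)) / k := by
    intro k a b hk
    rw [intervalIntegral.integral_comp_mul_left Real.exp hk, smul_eq_mul,
      integral_exp]
    field_simp
  -- bound the two middle integrals
  have hA0 : (0:ℝ) ≤ (B + 1 + μ) ^ 2 * c ^ 2 := by positivity
  have ib2 : (∫ s in (-3:ℝ)..(-1:ℝ), ‖F s‖ ^ 2) ≤
      (B + 1 + μ) ^ 2 * c ^ 2 * Real.exp (-(2 * ε * T)) *
        ((Real.exp (6 * ε) - Real.exp (2 * ε)) / (2 * ε)) := by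
    have hmono := intervalIntegral.integral_mono_on (by norm_num : (-3:ℝ) ≤ -1)
      (hgi (-3) (-1) (by linarith) (by linarith) (by norm_num))
      (Continuous.intervalIntegrable (by fun_prop) (-3) (-1)) keyp
    refine hmono.trans (le_of_eq ?_)
    have hrw : ∀ s : ℝ, (B + 1 + μ) ^ 2 * c ^ 2 * Real.exp (-(2 * ε * (T + s))) =
        ((B + 1 + μ) ^ 2 * c ^ 2 * Real.exp (-(2 * ε * T))) * Real.exp ((-(2 * ε)) * s) := by
      intro s
      have h : Real.exp (-(2 * ε * (T + s))) =
          Real.exp (-(2 * ε * T)) * Real.exp ((-(2 * ε)) * s) := by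
        rw [← Real.exp_add]; ring_nf
      rw [h]; ring
    simp_rw [hrw]
    rw [intervalIntegral.integral_const_mul, hexpint (-(2 * ε)) (-3) (-1) (by linarith)]
    rw [show (-(2 * ε)) * (-1 : ℝ) = 2 * ε by ring, show (-(2 * ε)) * (-3 : ℝ) = 6 * ε by ring]
    field_simp
    ring
  have ib4 : (∫ s in (1:ℝ)..(3:ℝ), ‖F s‖ ^ 2) ≤
      (B + 1 + μ) ^ 2 * c ^ 2 * Real.exp (-(2 * ε * T)) *
        ((Real.exp (6 * ε) - Real.exp (2 * ε)) / (2 * ε)) := by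
    have hmono := intervalIntegral.integral_mono_on (by norm_num : (1:ℝ) ≤ 3)
      (hgi 1 3 (by linarith) (by linarith) (by norm_num))
      (Continuous.intervalIntegrable (by fun_prop) 1 3) keym
    refine hmono.trans (le_of_eq ?_)
    have hrw : ∀ s : ℝ, (B + 1 + μ) ^ 2 * c ^ 2 * Real.exp (-(2 * ε * (T - s))) =
        ((B + 1 + μ) ^ 2 * c ^ 2 * Real.exp (-(2 * ε * T))) * Real.exp ((2 * ε) * s) := by
      intro s
      have h : Real.exp (-(2 * ε * (T - s))) =
          Real.exp (-(2 * ε * T)) * Real.exp ((2 * ε) * s) := by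
        rw [← Real.exp_add]; ring_nf
      rw [h]; ring
    simp_rw [hrw]
    rw [intervalIntegral.integral_const_mul, hexpint (2 * ε) 1 3 (by linarith)]
    rw [show (2 * ε) * (3 : ℝ) = 6 * ε by ring, show (2 * ε) * (1 : ℝ) = 2 * ε by ring]
  -- assemble
  have hE0 : (0:ℝ) ≤ Real.exp (-(2 * ε * T)) *
      ((Real.exp (6 * ε) - Real.exp (2 * ε)) / (2 * ε)) := by
    have h1 : Real.exp (2 * ε) ≤ Real.exp (6 * ε) := Real.exp_le_exp.mpr (by linarith)
    exact mul_nonneg (Real.exp_pos _).le (div_nonneg (by linarith) (by linarith))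
  have htotal : (∫ s in (-T)..T, ‖F s‖ ^ 2) =
      (∫ s in (-T)..(-3:ℝ), ‖F s‖ ^ 2) + (∫ s in (-3:ℝ)..(-1:ℝ), ‖F s‖ ^ 2)
        + (∫ s in (-1:ℝ)..(1:ℝ), ‖F s‖ ^ 2) + (∫ s in (1:ℝ)..(3:ℝ), ‖F s‖ ^ 2)
        + (∫ s in (3:ℝ)..T, ‖F s‖ ^ 2) := by
    linarith [e1, e2, e3, e4]
  rw [htotal, z1, z3, z5]
  have hfin : (B + 1 + μ) ^ 2 * c ^ 2 * Real.exp (-(2 * ε * T)) *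
      ((Real.exp (6 * ε) - Real.exp (2 * ε)) / (2 * ε)) * 2 ≤
      2 * (B + 1 + μ) ^ 2 * c ^ 2 * ((Real.exp (6 * ε) - Real.exp (2 * ε)) / ε) *
        Real.exp (-(2 * ε * T)) := by
    have h1 : Real.exp (2 * ε) ≤ Real.exp (6 * ε) := Real.exp_le_exp.mpr (by linarith)
    have h2 : (0:ℝ) < Real.exp (-(2 * ε * T)) := Real.exp_pos _
    rw [div_eq_mul_inv, div_eq_mul_inv]
    have h3 : ((2:ℝ) * ε)⁻¹ = ε⁻¹ / 2 := by
      rw [mul_inv]; ring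
    rw [h3]
    have hεinv : (0:ℝ) ≤ ε⁻¹ := by positivity
    nlinarith [mul_nonneg (mul_nonneg hA0 h2.le) (mul_nonneg (sub_nonneg.mpr h1) hεinv)]
  linarith [ib2, ib4, hfin]
end

section
/- Newton–Picard zero detection without quadratic estimates: suppose x₁ ∈ X satisfies ‖x₁ − x₀‖ < δ/8 and ‖f(x₁)‖ < δ/(4c). Then there exists a unique x ∈ X such that f(x) = 0, x − x₁ lies in the range of Q, and ‖x − x₀‖ < δ. Moreover this x satisfies ‖x − x₁‖ ≤ 2c·‖f(x₁)‖. -/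
/-!
Pulling back along the affine map `y ↦ x₁ + Q y` turns the problem into finding a zero of
`g y = f (x₁ + Q y)` on `Y`. Since `df(x₀) ∘ Q = id`, the mean value inequality shows that `g`
approximates the identity with Lipschitz constant `‖Q‖ / (2c) ≤ 1/2` wherever `x₁ + Q y` stays in
`B_δ(x₀)`. So `y ↦ y - g y` is a contraction there: it has a unique fixed point, and that fixed
point lies within `‖g 0‖ / (1 - 1/2) = 2‖f x₁‖` of `0`.
-/

open Metric Set NNReal

theorem Convex.approximatesLinearOn_of_norm_hasFDerivAt_sub_le
    {E F : Type*} [NormedAddCommGroup E] [NormedSpace ℝ E] [NormedAddCommGroup F] [NormedSpace ℝ F]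
    {f : E → F} {f' : E → E →L[ℝ] F} {A : E →L[ℝ] F} {s : Set E} {C : ℝ≥0} (hs : Convex ℝ s)
    (hf : ∀ x ∈ s, HasFDerivAt f (f' x) x) (bound : ∀ x ∈ s, ‖f' x - A‖ ≤ C) :
    ApproximatesLinearOn f A s C := fun _ hx _ hy =>
  hs.norm_image_sub_le_of_norm_hasFDerivWithin_le' (fun z hz => (hf z hz).hasFDerivWithinAt)
    bound hy hx

section

variable {𝕜 E F G : Type*} [NontriviallyNormedField 𝕜]
  [NormedAddCommGroup E] [NormedSpace 𝕜 E] [NormedAddCommGroup F] [NormedSpace 𝕜 F]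
  [NormedAddCommGroup G] [NormedSpace 𝕜 G]

theorem ContinuousLinearMap.closedBall_zero_subset_preimage_const_add_ball (Q : G →L[𝕜] E)
    {a b : E} {r δ : ℝ} (h : ‖a - b‖ + ‖Q‖ * r < δ) :
    closedBall 0 r ⊆ (a + Q ·) ⁻¹' ball b δ := fun y hy => by
  rw [mem_closedBall_zero_iff] at hy
  rw [mem_preimage, mem_ball_iff_norm, add_sub_right_comm]
  calc ‖a - b + Q y‖ ≤ ‖a - b‖ + ‖Q‖ * ‖y‖ :=
        (norm_add_le _ _).trans (by gcongr; exact Q.le_opNorm y)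
    _ ≤ ‖a - b‖ + ‖Q‖ * r := by gcongr
    _ < δ := h

namespace ApproximatesLinearOn

theorem comp_const_add_clm {f : E → F} {A : E →L[𝕜] F} {s : Set E} {K : ℝ≥0}
    (hf : ApproximatesLinearOn f A s K) (a : E) (Q : G →L[𝕜] E) :
    ApproximatesLinearOn (fun y => f (a + Q y)) (A.comp Q) ((a + Q ·) ⁻¹' s) (K * ‖Q‖₊) := by
  intro y hy y' hy'
  have hdiff : a + Q y - (a + Q y') = Q (y - y') := by rw [map_sub]; abel
  calc ‖f (a + Q y) - f (a + Q y') - A (Q (y - y'))‖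
      ≤ K * ‖Q (y - y')‖ := hdiff ▸ hf _ hy _ hy'
    _ ≤ K * (‖Q‖ * ‖y - y'‖) := by gcongr; exact Q.le_opNorm _
    _ = ↑(K * ‖Q‖₊) * ‖y - y'‖ := by push_cast; ring

variable {g : G → G} {s : Set G} {c : ℝ≥0}

theorem injOn_of_id (hg : ApproximatesLinearOn g (ContinuousLinearMap.id 𝕜 G) s c) (hc : c < 1) :
    InjOn g s := by
  rcases subsingleton_or_nontrivial G with hG | hG
  · exact hg.injOn (f' := ContinuousLinearEquiv.refl 𝕜 G) (Or.inl hG)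
  · exact hg.injOn (f' := ContinuousLinearEquiv.refl 𝕜 G) (Or.inr (by simpa using hc))

theorem exists_mem_closedBall_eq_zero_of_id [CompleteSpace G]
    (hg : ApproximatesLinearOn g (ContinuousLinearMap.id 𝕜 G) s c) (hc : c < 1) {b : G}
    (hs : closedBall b (‖g b‖ / (1 - c)) ⊆ s) : ∃ y ∈ closedBall b (‖g b‖ / (1 - c)), g y = 0 := by
  have hc' : 0 < 1 - (c : ℝ) := sub_pos.2 (by exact_mod_cast hc)
  let idInv : (ContinuousLinearMap.id 𝕜 G).NonlinearRightInverse := ⟨id, 1, by simp, by simp⟩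
  refine hg.surjOn_closedBall_of_nonlinearRightInverse idInv (by positivity) hs ?_
  rw [mem_closedBall, dist_zero_left]
  have hN : (idInv.nnnorm : ℝ)⁻¹ = 1 := by simp [idInv]
  rw [hN, mul_div_cancel₀ _ hc'.ne']

end ApproximatesLinearOn

end

theorem newton_picard_zero_detection_general
    {X Y : Type*} [NormedAddCommGroup X] [NormedSpace ℝ X]
    [NormedAddCommGroup Y] [NormedSpace ℝ Y] [CompleteSpace Y]
    (U : Set X)
    (f : X → Y) (f' : X → X →L[ℝ] Y)
    (hf : ∀ x ∈ U, HasFDerivAt f (f' x) x)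
    (x₀ : X)
    (Q : Y →L[ℝ] X)
    (hQ : (f' x₀).comp Q = ContinuousLinearMap.id ℝ Y)
    (δ c : ℝ) (hc : 0 < c)
    (hQnorm : ‖Q‖ ≤ c)
    (hball : Metric.ball x₀ δ ⊆ U)
    (hsmall : ∀ x : X, ‖x - x₀‖ < δ → ‖f' x - f' x₀‖ ≤ 1 / (2 * c))
    (x₁ : X) (h₁ : ‖x₁ - x₀‖ < δ / 8) (h₂ : ‖f x₁‖ < δ / (4 * c)) :
    ∃ x : X,
      (f x = 0 ∧ x - x₁ ∈ Set.range Q ∧ ‖x - x₀‖ < δ ∧ ‖x - x₁‖ ≤ 2 * c * ‖f x₁‖) ∧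
      ∀ x' : X, f x' = 0 → x' - x₁ ∈ Set.range Q → ‖x' - x₀‖ < δ → x' = x := by
  set S : Set Y := (x₁ + Q ·) ⁻¹' ball x₀ δ
  let K : ℝ≥0 := ⟨1 / (2 * c), by positivity⟩
  have hK : K * ‖Q‖₊ ≤ 1 / 2 := by
    rw [← NNReal.coe_le_coe]; push_cast
    calc 1 / (2 * c) * ‖Q‖ ≤ 1 / (2 * c) * c := by gcongr
      _ = 1 / 2 := by field_simp
  have hf_approx : ApproximatesLinearOn f (f' x₀) (ball x₀ δ) K :=
    (convex_ball x₀ δ).approximatesLinearOn_of_norm_hasFDerivAt_sub_le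
      (fun x hx => hf x (hball hx)) (fun x hx => hsmall x (mem_ball_iff_norm.1 hx))
  have hg : ApproximatesLinearOn (fun y => f (x₁ + Q y)) (ContinuousLinearMap.id ℝ Y) S (1 / 2) :=
    hQ ▸ (hf_approx.comp_const_add_clm x₁ Q).mono_num hK
  have hQf : ‖Q‖ * (2 * ‖f x₁‖) ≤ 2 * c * ‖f x₁‖ := by nlinarith [norm_nonneg (f x₁)]
  have hradius : ‖f (x₁ + Q 0)‖ / (1 - ((1 / 2 : ℝ≥0) : ℝ)) = 2 * ‖f x₁‖ := by
    norm_num; ring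
  have hS : closedBall 0 (2 * ‖f x₁‖) ⊆ S := by
    refine Q.closedBall_zero_subset_preimage_const_add_ball ?_
    rw [lt_div_iff₀ (by positivity)] at h₂
    linarith [norm_nonneg (x₁ - x₀)]
  obtain ⟨y, hy, hy0⟩ := hg.exists_mem_closedBall_eq_zero_of_id (by norm_num) (hradius ▸ hS)
  rw [hradius] at hy
  refine ⟨x₁ + Q y, ⟨hy0, ⟨y, by abel⟩, mem_ball_iff_norm.1 (hS hy), ?_⟩, ?_⟩
  · rw [add_sub_cancel_left]
    calc ‖Q y‖ ≤ ‖Q‖ * ‖y‖ := Q.le_opNorm y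
      _ ≤ ‖Q‖ * (2 * ‖f x₁‖) := by gcongr; exact mem_closedBall_zero_iff.1 hy
      _ ≤ 2 * c * ‖f x₁‖ := hQf
  · rintro x' hx'0 ⟨y', hy'⟩ hx'
    obtain rfl : x' = x₁ + Q y' := by rw [hy']; abel
    rw [hg.injOn_of_id (by norm_num) (mem_ball_iff_norm.2 hx') (hS hy) (hx'0.trans hy0.symm)]

/-- **Newton–Picard zero detection without quadratic estimates**
(McDuff–Salamon, Proposition A.3.4).  Let `X`, `Y` be Banach spaces, `U ⊆ X`
open, `f : U → Y` continuously differentiable (with derivative `f'`), `x₀ ∈ U`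
with `D := df(x₀)` surjective admitting a bounded right inverse `Q` with
`‖Q‖ ≤ c`, `B_δ(x₀) ⊆ U`, and `‖df(x) - D‖ ≤ 1/(2c)` for `‖x - x₀‖ < δ`.
If `x₁` satisfies `‖x₁ - x₀‖ < δ/8` and `‖f(x₁)‖ < δ/(4c)`, then there is a
unique `x` with `f(x) = 0`, `x - x₁ ∈ range Q` and `‖x - x₀‖ < δ`; moreover
`‖x - x₁‖ ≤ 2c ‖f(x₁)‖`. -/
theorem newton_picard_zero_detection
    {X Y : Type*} [NormedAddCommGroup X] [NormedSpace ℝ X] [CompleteSpace X]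
    [NormedAddCommGroup Y] [NormedSpace ℝ Y] [CompleteSpace Y]
    (U : Set X) (hU : IsOpen U)
    (f : X → Y) (f' : X → X →L[ℝ] Y)
    (hf : ∀ x ∈ U, HasFDerivAt f (f' x) x)
    (hf'cont : ContinuousOn f' U)
    (x₀ : X) (hx₀ : x₀ ∈ U)
    (Q : Y →L[ℝ] X)
    (hQ : (f' x₀).comp Q = ContinuousLinearMap.id ℝ Y)
    (δ c : ℝ) (hδ : 0 < δ) (hc : 0 < c)
    (hQnorm : ‖Q‖ ≤ c)
    (hball : Metric.ball x₀ δ ⊆ U)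
    (hsmall : ∀ x : X, ‖x - x₀‖ < δ → ‖f' x - f' x₀‖ ≤ 1 / (2 * c))
    (x₁ : X) (h₁ : ‖x₁ - x₀‖ < δ / 8) (h₂ : ‖f x₁‖ < δ / (4 * c)) :
    ∃ x : X,
      (f x = 0 ∧ x - x₁ ∈ Set.range Q ∧ ‖x - x₀‖ < δ ∧ ‖x - x₁‖ ≤ 2 * c * ‖f x₁‖) ∧
      ∀ x' : X, f x' = 0 → x' - x₁ ∈ Set.range Q → ‖x' - x₀‖ < δ → x' = x :=
  newton_picard_zero_detection_general U f f' hf x₀ Q hQ δ c hc hQnorm hball hsmall x₁ h₁ h₂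
end

section
/- The tangent map of the Newton–Picard map is the Newton–Picard map of the tangent map: let x₁ ∈ U₀(δ) and let ξ₁ ∈ X satisfy ‖ξ₁‖ < δ/(8(1 + ‖id_X − Q∘D‖)) and ‖df(x₁)ξ₁‖ < δ/(4c). Set x := 𝒩(x₁) and ξ := d𝒩(x₁)ξ₁. Then (x, ξ) is the unique pair in X × X satisfying: f(x) = 0, df(x)ξ = 0, x − x₁ ∈ range Q, ξ − ξ₁ ∈ range Q, and max{‖x − x₀‖, (δ̂/δ)·‖ξ‖} < δ. Moreover max{‖x − x₁‖, (δ̂/δ)·‖ξ − ξ₁‖} ≤ 2c · max{‖f(x₁)‖, (δ̂/δ)·‖df(x₁)ξ₁‖}. -/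
/-!
Each of `f` on `B_δ(x₀)`, `df(x₁)` and `df(x)` is `1/(4c)`-close to `D` in the sense
`‖g b - g a - D(b - a)‖ ≤ ‖b - a‖/(4c)` (for `f` by the mean value inequality).
If moreover `b - a ∈ range Q`, then `b - a = Q D (b - a)` gives
`‖b - a‖ ≤ c‖g b - g a‖ + ‖b - a‖/4`, hence `‖b - a‖ ≤ 2c‖g b - g a‖`.
This one estimate yields both the displacement bounds and uniqueness.
That `(x, ξ)` solves the equations follows from the chain rule for `f ∘ 𝒩 = 0` near `x₁`,
and from applying `D` to the identity defining `d𝒩(x₁)`, which also gives `df(x₁)ξ = 0`.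
-/

open Filter Topology

section

variable {X Y : Type*} [NormedAddCommGroup X] [NormedSpace ℝ X]
  [NormedAddCommGroup Y] [NormedSpace ℝ Y]
  {D L : X →L[ℝ] Y} {Q : Y →L[ℝ] X} {T : X →L[ℝ] X} {c ε : ℝ}

theorem norm_le_two_mul_norm_of_mem_range (hQ : D.comp Q = ContinuousLinearMap.id ℝ Y)
    (hQc : ‖Q‖ ≤ c) (hcε : c * ε ≤ 1 / 2) {v : X} {w : Y} (hv : v ∈ Set.range Q)
    (hw : ‖w - D v‖ ≤ ε * ‖v‖) : ‖v‖ ≤ 2 * c * ‖w‖ := by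
  obtain ⟨y, rfl⟩ := hv
  have hc : 0 ≤ c := (norm_nonneg Q).trans hQc
  have hQD : Q (D (Q y)) = Q y := by
    rw [← ContinuousLinearMap.comp_apply D Q, hQ, ContinuousLinearMap.id_apply]
  have hDv : ‖D (Q y)‖ ≤ ‖w‖ + ε * ‖Q y‖ :=
    (norm_le_norm_add_norm_sub' _ w).trans (by rw [norm_sub_rev]; gcongr)
  have : ‖Q y‖ ≤ c * (‖w‖ + ε * ‖Q y‖) :=
    calc ‖Q y‖ = ‖Q (D (Q y))‖ := by rw [hQD]
      _ ≤ c * ‖D (Q y)‖ := Q.le_of_opNorm_le hQc _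
      _ ≤ c * (‖w‖ + ε * ‖Q y‖) := by gcongr
  nlinarith [norm_nonneg (Q y)]

theorem norm_sub_le_two_mul_norm_sub_of_mem_range {f : X → Y} {f' : X → X →L[ℝ] Y}
    {s : Set X} (hs : Convex ℝ s) (hf : ∀ x ∈ s, HasFDerivWithinAt f (f' x) s x)
    (hf' : ∀ x ∈ s, ‖f' x - D‖ ≤ ε) (hQ : D.comp Q = ContinuousLinearMap.id ℝ Y)
    (hQc : ‖Q‖ ≤ c) (hcε : c * ε ≤ 1 / 2) {a b : X} (ha : a ∈ s) (hb : b ∈ s)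
    (hab : b - a ∈ Set.range Q) : ‖b - a‖ ≤ 2 * c * ‖f b - f a‖ :=
  norm_le_two_mul_norm_of_mem_range hQ hQc hcε hab
    (hs.norm_image_sub_le_of_norm_hasFDerivWithin_le' hf hf' ha hb)

theorem eq_of_sub_mem_range_of_apply_eq {f : X → Y} {f' : X → X →L[ℝ] Y} {s : Set X}
    (hs : Convex ℝ s) (hf : ∀ x ∈ s, HasFDerivWithinAt f (f' x) s x)
    (hf' : ∀ x ∈ s, ‖f' x - D‖ ≤ ε) (hQ : D.comp Q = ContinuousLinearMap.id ℝ Y)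
    (hQc : ‖Q‖ ≤ c) (hcε : c * ε ≤ 1 / 2) {a b : X} (ha : a ∈ s) (hb : b ∈ s)
    (hab : b - a ∈ Set.range Q) (hfab : f a = f b) : b = a := by
  have := norm_sub_le_two_mul_norm_sub_of_mem_range hs hf hf' hQ hQc hcε ha hb hab
  rw [hfab, sub_self, norm_zero, mul_zero] at this
  exact sub_eq_zero.1 (norm_le_zero_iff.1 this)

theorem norm_le_two_mul_norm_apply_of_mem_range
    (hQ : D.comp Q = ContinuousLinearMap.id ℝ Y) (hQc : ‖Q‖ ≤ c) (hcε : c * ε ≤ 1 / 2)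
    (hL : ‖L - D‖ ≤ ε) {v : X} (hv : v ∈ Set.range Q) : ‖v‖ ≤ 2 * c * ‖L v‖ :=
  norm_le_two_mul_norm_of_mem_range hQ hQc hcε hv
    (by simpa using (L - D).le_of_opNorm_le hL v)

theorem sub_mem_range_of_sub_mem_range {a b x : X} (ha : a - x ∈ Set.range Q)
    (hb : b - x ∈ Set.range Q) : a - b ∈ Set.range Q := by
  obtain ⟨y, hy⟩ := ha
  obtain ⟨z, hz⟩ := hb
  exact ⟨y - z, by rw [map_sub, hy, hz, sub_sub_sub_cancel_right]⟩


open ContinuousLinearMap in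
theorem comp_eq_zero_of_comp_eq_id_sub_comp (hQ : D.comp Q = ContinuousLinearMap.id ℝ Y)
    (hT : (ContinuousLinearMap.id ℝ X + Q.comp L - Q.comp D).comp T =
      ContinuousLinearMap.id ℝ X - Q.comp D) :
    L.comp T = 0 := by
  have hDL : D.comp (ContinuousLinearMap.id ℝ X + Q.comp L - Q.comp D) = L := by
    rw [comp_sub, comp_add, ← comp_assoc, ← comp_assoc, hQ, id_comp, comp_id, id_comp,
      add_sub_cancel_left]
  rw [← hDL, comp_assoc, hT, comp_sub, comp_id, ← comp_assoc, hQ, id_comp, sub_self]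

open ContinuousLinearMap in
theorem apply_sub_mem_range_of_comp_eq_id_sub_comp
    (hT : (ContinuousLinearMap.id ℝ X + Q.comp L - Q.comp D).comp T =
      ContinuousLinearMap.id ℝ X - Q.comp D) (ξ : X) :
    T ξ - ξ ∈ Set.range Q := by
  refine ⟨D (T ξ) - L (T ξ) - D ξ, ?_⟩
  have := congrArg (· ξ) hT
  simp only [comp_apply, add_apply, sub_apply, id_apply] at this
  rw [map_sub, map_sub, ← sub_eq_zero, ← neg_eq_zero, ← sub_eq_zero.2 this]
  abel

theorem norm_apply_sub_le_of_comp_eq_id_sub_comp (hQ : D.comp Q = ContinuousLinearMap.id ℝ Y)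
    (hQc : ‖Q‖ ≤ c) (hcε : c * ε ≤ 1 / 2) (hL : ‖L - D‖ ≤ ε)
    (hT : (ContinuousLinearMap.id ℝ X + Q.comp L - Q.comp D).comp T =
      ContinuousLinearMap.id ℝ X - Q.comp D) (ξ : X) :
    ‖T ξ - ξ‖ ≤ 2 * c * ‖L ξ‖ := by
  have hLT : L (T ξ) = 0 := by
    simpa using congrArg (· ξ) (comp_eq_zero_of_comp_eq_id_sub_comp hQ hT)
  simpa [hLT] using norm_le_two_mul_norm_apply_of_mem_range hQ hQc hcε hL
    (apply_sub_mem_range_of_comp_eq_id_sub_comp hT ξ)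

theorem HasFDerivAt.eq_zero_of_eventuallyEq_zero {g : X → Y} {g' : X →L[ℝ] Y} {x : X}
    (hg : HasFDerivAt g g' x) (h : ∀ᶠ y in 𝓝 x, g y = 0) : g' = 0 :=
  hg.unique ((hasFDerivAt_const 0 x).congr_of_eventuallyEq h)

end

theorem newton_picard_tangent_map_identification_general
    {X Y : Type*} [NormedAddCommGroup X] [NormedSpace ℝ X]
    [NormedAddCommGroup Y] [NormedSpace ℝ Y]
    (U : Set X)
    (f : X → Y) (f' : X → X →L[ℝ] Y)
    (hf : ∀ x ∈ U, HasFDerivAt f (f' x) x)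
    (x₀ : X)
    (Q : Y →L[ℝ] X)
    (hQ : (f' x₀).comp Q = ContinuousLinearMap.id ℝ Y)
    (δ c c₂ : ℝ) (hδ : 0 < δ) (hc : 0 < c) (hc₂ : 0 < c₂)
    (hQnorm : ‖Q‖ ≤ c)
    (hball : Metric.ball x₀ δ ⊆ U)
    (hsmall : ∀ x : X, ‖x - x₀‖ < δ → ‖f' x - f' x₀‖ ≤ 1 / (4 * c))
    (δhat : ℝ) (hδhat : δhat = min δ (1 / (4 * c * c₂)))
    (U₀ : Set X) (hU₀ : U₀ = {x₁ : X | ‖x₁ - x₀‖ < δ / 8 ∧ ‖f x₁‖ < δ / (4 * c)})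
    (N : X → X) (N' : X → X →L[ℝ] X)
    (hN : ∀ x₁ ∈ U₀, f (N x₁) = 0 ∧ N x₁ - x₁ ∈ Set.range Q ∧ ‖N x₁ - x₀‖ < δ)
    (hNderiv : ∀ x₁ ∈ U₀, HasFDerivAt N (N' x₁) x₁)
    (hN' : ∀ x₁ ∈ U₀,
      (ContinuousLinearMap.id ℝ X + Q.comp (f' x₁) - Q.comp (f' x₀)).comp (N' x₁) =
        ContinuousLinearMap.id ℝ X - Q.comp (f' x₀))
    (x₁ : X) (hx₁ : x₁ ∈ U₀) (ξ₁ : X)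
    (hξ₁ : ‖ξ₁‖ < δ / (8 * (1 + ‖ContinuousLinearMap.id ℝ X - Q.comp (f' x₀)‖)))
    (hξ₁' : ‖f' x₁ ξ₁‖ < δ / (4 * c)) :
    (f (N x₁) = 0 ∧ f' (N x₁) (N' x₁ ξ₁) = 0 ∧
      N x₁ - x₁ ∈ Set.range Q ∧ N' x₁ ξ₁ - ξ₁ ∈ Set.range Q ∧
      max ‖N x₁ - x₀‖ ((δhat / δ) * ‖N' x₁ ξ₁‖) < δ) ∧
    (∀ x ξ : X, f x = 0 → f' x ξ = 0 →
      x - x₁ ∈ Set.range Q → ξ - ξ₁ ∈ Set.range Q →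
      max ‖x - x₀‖ ((δhat / δ) * ‖ξ‖) < δ →
      x = N x₁ ∧ ξ = N' x₁ ξ₁) ∧
    max ‖N x₁ - x₁‖ ((δhat / δ) * ‖N' x₁ ξ₁ - ξ₁‖) ≤
      2 * c * max ‖f x₁‖ ((δhat / δ) * ‖f' x₁ ξ₁‖) := by
  subst hU₀ hδhat
  obtain ⟨hfN, hNx₁, hNx₀⟩ := hN x₁ hx₁
  set B := Metric.ball x₀ δ
  have hcε : c * (1 / (4 * c)) ≤ 1 / 2 := by field_simp; norm_num
  have hf'B : ∀ z ∈ B, ‖f' z - f' x₀‖ ≤ 1 / (4 * c) := fun z hz =>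
    hsmall z (mem_ball_iff_norm.1 hz)
  have hfB : ∀ z ∈ B, HasFDerivWithinAt f (f' z) B z := fun z hz =>
    (hf z (hball hz)).hasFDerivWithinAt
  have hx₁B : x₁ ∈ B := mem_ball_iff_norm.2 (by linarith [hx₁.1])
  have hNB : N x₁ ∈ B := mem_ball_iff_norm.2 hNx₀
  have hfNnear : ∀ᶠ y in 𝓝 x₁, f (N y) = 0 :=
    have hfx₁ := (hf x₁ (hball hx₁B)).continuousAt.norm
    ((continuous_id.sub continuous_const).norm.continuousAt.eventually_lt continuousAt_const hx₁.1
      |>.and (hfx₁.eventually_lt continuousAt_const hx₁.2)).mono fun y hy => (hN y hy).1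
  have hfNξ : f' (N x₁) (N' x₁ ξ₁) = 0 := by
    simpa using congrArg (· ξ₁)
      (((hf _ (hball hNB)).comp x₁ (hNderiv x₁ hx₁)).eq_zero_of_eventuallyEq_zero hfNnear)
  have hξr := apply_sub_mem_range_of_comp_eq_id_sub_comp (hN' x₁ hx₁) ξ₁
  have hxbound : ‖N x₁ - x₁‖ ≤ 2 * c * ‖f x₁‖ := by
    simpa [hfN] using norm_sub_le_two_mul_norm_sub_of_mem_range (convex_ball x₀ δ) hfB hf'B hQ
      hQnorm hcε hx₁B hNB hNx₁
  have hξbound : ‖N' x₁ ξ₁ - ξ₁‖ ≤ 2 * c * ‖f' x₁ ξ₁‖ :=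
    norm_apply_sub_le_of_comp_eq_id_sub_comp hQ hQnorm hcε (hf'B x₁ hx₁B) (hN' x₁ hx₁) _
  have hξ : ‖N' x₁ ξ₁‖ < δ := by
    have hξ₁δ : ‖ξ₁‖ < δ / 8 := hξ₁.trans_le <| by
      gcongr; linarith [norm_nonneg (ContinuousLinearMap.id ℝ X - Q.comp (f' x₀))]
    have hfξ₁δ : 2 * c * ‖f' x₁ ξ₁‖ < δ / 2 :=
      calc 2 * c * ‖f' x₁ ξ₁‖ < 2 * c * (δ / (4 * c)) := by gcongr
        _ = δ / 2 := by field_simp; ring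
    linarith [norm_le_norm_add_norm_sub' (N' x₁ ξ₁) ξ₁]
  set r := min δ (1 / (4 * c * c₂)) / δ
  have hr₀ : 0 ≤ r := by positivity
  have hr₁ : r ≤ 1 := div_le_one_of_le₀ (min_le_left _ _) hδ.le
  refine ⟨⟨hfN, hfNξ, hNx₁, hξr,
    max_lt hNx₀ ((mul_le_of_le_one_left (norm_nonneg _) hr₁).trans_lt hξ)⟩,
    fun x ξ hfx hfxξ hx hξ' hmax => ?_, ?_⟩
  · have hxB : x ∈ B := mem_ball_iff_norm.2 ((le_max_left _ _).trans_lt hmax)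
    obtain rfl : x = N x₁ := eq_of_sub_mem_range_of_apply_eq (convex_ball x₀ δ) hfB hf'B hQ
      hQnorm hcε hNB hxB (sub_mem_range_of_sub_mem_range hx hNx₁) (hfN.trans hfx.symm)
    refine ⟨rfl, sub_eq_zero.1 (norm_le_zero_iff.1 ?_)⟩
    simpa [hfxξ, hfNξ] using norm_le_two_mul_norm_apply_of_mem_range hQ hQnorm hcε (hf'B _ hNB)
      (sub_mem_range_of_sub_mem_range hξ' hξr)
  · calc _ ≤ max (2 * c * ‖f x₁‖) (2 * c * (r * ‖f' x₁ ξ₁‖)) :=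
          max_le_max hxbound (by rw [mul_left_comm]; exact mul_le_mul_of_nonneg_left hξbound hr₀)
      _ = _ := (mul_max_of_nonneg _ _ (by positivity)).symm

/-- **The tangent map of the Newton–Picard map is the Newton–Picard map of the
tangent map.** In the setting of the Newton–Picard map for a twice
continuously differentiable `f` (with `‖df(x) - D‖ ≤ 1/(4c)` and
`‖d²f(x)‖ ≤ c₂` on `B_δ(x₀)`, `δ̂ := min{δ, 1/(4cc₂)}`): let `x₁ ∈ U₀(δ)` and
let `ξ₁` satisfy `‖ξ₁‖ < δ/(8(1 + ‖id - Q∘D‖))` and `‖df(x₁)ξ₁‖ < δ/(4c)`.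
Set `x := 𝒩(x₁)` and `ξ := d𝒩(x₁)ξ₁`.  Then `(x, ξ)` is the unique pair with
`f(x) = 0`, `df(x)ξ = 0`, `x - x₁ ∈ range Q`, `ξ - ξ₁ ∈ range Q`, and
`max{‖x - x₀‖, (δ̂/δ)‖ξ‖} < δ`; moreover
`max{‖x - x₁‖, (δ̂/δ)‖ξ - ξ₁‖} ≤ 2c · max{‖f(x₁)‖, (δ̂/δ)‖df(x₁)ξ₁‖}`. -/
theorem newton_picard_tangent_map_identification
    {X Y : Type*} [NormedAddCommGroup X] [NormedSpace ℝ X] [CompleteSpace X]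
    [NormedAddCommGroup Y] [NormedSpace ℝ Y] [CompleteSpace Y]
    (U : Set X) (hU : IsOpen U)
    (f : X → Y) (f' : X → X →L[ℝ] Y) (f'' : X → X →L[ℝ] X →L[ℝ] Y)
    (hf : ∀ x ∈ U, HasFDerivAt f (f' x) x)
    (hf' : ∀ x ∈ U, HasFDerivAt f' (f'' x) x)
    (hf''cont : ContinuousOn f'' U)
    (x₀ : X) (hx₀ : x₀ ∈ U)
    (Q : Y →L[ℝ] X)
    (hQ : (f' x₀).comp Q = ContinuousLinearMap.id ℝ Y)
    (δ c c₂ : ℝ) (hδ : 0 < δ) (hc : 0 < c) (hc₂ : 0 < c₂)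
    (hQnorm : ‖Q‖ ≤ c)
    (hball : Metric.ball x₀ δ ⊆ U)
    (hsmall : ∀ x : X, ‖x - x₀‖ < δ → ‖f' x - f' x₀‖ ≤ 1 / (4 * c))
    (hc₂bound : ∀ x : X, ‖x - x₀‖ < δ → ‖f'' x‖ ≤ c₂)
    (δhat : ℝ) (hδhat : δhat = min δ (1 / (4 * c * c₂)))
    (U₀ : Set X) (hU₀ : U₀ = {x₁ : X | ‖x₁ - x₀‖ < δ / 8 ∧ ‖f x₁‖ < δ / (4 * c)})
    (N : X → X) (N' : X → X →L[ℝ] X)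
    (hN : ∀ x₁ ∈ U₀, f (N x₁) = 0 ∧ N x₁ - x₁ ∈ Set.range Q ∧ ‖N x₁ - x₀‖ < δ)
    (hNderiv : ∀ x₁ ∈ U₀, HasFDerivAt N (N' x₁) x₁)
    (hN' : ∀ x₁ ∈ U₀,
      (ContinuousLinearMap.id ℝ X + Q.comp (f' x₁) - Q.comp (f' x₀)).comp (N' x₁) =
        ContinuousLinearMap.id ℝ X - Q.comp (f' x₀))
    (x₁ : X) (hx₁ : x₁ ∈ U₀) (ξ₁ : X)
    (hξ₁ : ‖ξ₁‖ < δ / (8 * (1 + ‖ContinuousLinearMap.id ℝ X - Q.comp (f' x₀)‖)))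
    (hξ₁' : ‖f' x₁ ξ₁‖ < δ / (4 * c)) :
    (f (N x₁) = 0 ∧ f' (N x₁) (N' x₁ ξ₁) = 0 ∧
      N x₁ - x₁ ∈ Set.range Q ∧ N' x₁ ξ₁ - ξ₁ ∈ Set.range Q ∧
      max ‖N x₁ - x₀‖ ((δhat / δ) * ‖N' x₁ ξ₁‖) < δ) ∧
    (∀ x ξ : X, f x = 0 → f' x ξ = 0 →
      x - x₁ ∈ Set.range Q → ξ - ξ₁ ∈ Set.range Q →
      max ‖x - x₀‖ ((δhat / δ) * ‖ξ‖) < δ →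
      x = N x₁ ∧ ξ = N' x₁ ξ₁) ∧
    max ‖N x₁ - x₁‖ ((δhat / δ) * ‖N' x₁ ξ₁ - ξ₁‖) ≤
      2 * c * max ‖f x₁‖ ((δhat / δ) * ‖f' x₁ ξ₁‖) :=
  newton_picard_tangent_map_identification_general U f f' hf x₀ Q hQ δ c c₂ hδ hc hc₂ hQnorm hball
    hsmall δhat hδhat U₀ hU₀ N N' hN hNderiv hN' x₁ hx₁ ξ₁ hξ₁ hξ₁'
end
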